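/- arXiv:2502.19079 — 9 statements merged into one kernel-verified Lean document; each statement's English description precedes it below -/
import Mathlib

section
/- Let {y_n} be an unbounded sequence of positive real numbers. Then there are infinitely many N such that y_N > (1 + 1/N^2) · max_{1 ≤ n < N} y_n. -/
open Filter

lemma sq_sum_le (N : ℕ) :
    ∑ k ∈ Finset.Ico 1 (N + 2), (1 : ℝ) / (k : ℝ) ^ 2 ≤ 2 - 1 / ((N : ℝ) + 1) := by
  induction N with
  | zero => norm_num
  | succ N ih =>
      rw [Finset.sum_Ico_succ_top (by omega : 1 ≤ N + 2)]
      have h1 : (1 : ℝ) / ((N + 2 : ℕ) : ℝ) ^ 2 ≤ 1 / ((N : ℝ) + 1) - 1 / ((N : ℝ) + 2) := by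
        push_cast
        rw [div_sub_div _ _ (by positivity) (by positivity), div_le_div_iff₀ (by positivity) (by positivity)]
        nlinarith [sq_nonneg ((N : ℝ) + 1)]
      have heq : ((N : ℝ) + 1 + 1) = (N : ℝ) + 2 := by ring
      push_cast at h1 ih ⊢
      rw [heq]
      linarith

theorem stmt0 (y : ℕ → ℝ) (hpos : ∀ n, 0 < y n)
    (hunbdd : ∀ C : ℝ, ∃ n, C < y n) :
    ∃ᶠ N : ℕ in atTop, ∀ n ∈ Finset.Ico 1 N, (1 + 1 / (N : ℝ) ^ 2) * y n < y N := by
  by_contra h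
  rw [Filter.not_frequently, Filter.eventually_atTop] at h
  obtain ⟨m, hm⟩ := h
  replace hm : ∀ N, m ≤ N → ∃ n ∈ Finset.Ico 1 N, y N ≤ (1 + 1 / (N : ℝ) ^ 2) * y n := by
    intro N hN
    have := hm N hN
    push_neg at this
    exact this
  set M := max m 1 with hM
  have hM1 : 1 ≤ M := le_max_right _ _
  have hMm : m ≤ M := le_max_left _ _
  have hne : (Finset.range M).Nonempty := ⟨0, Finset.mem_range.2 (by omega)⟩
  set B := (Finset.range M).sup' hne y with hB
  have hBpos : 0 < B := lt_of_lt_of_le (hpos 0) (Finset.le_sup' y (Finset.mem_range.2 (by omega)))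
  have hfac : ∀ k : ℕ, (1 : ℝ) ≤ 1 + 1 / (k : ℝ) ^ 2 := by
    intro k
    have : (0 : ℝ) ≤ 1 / (k : ℝ) ^ 2 := by positivity
    linarith
  have key : ∀ N, y N ≤ B * ∏ k ∈ Finset.Ico M (N + 1), (1 + 1 / (k : ℝ) ^ 2) := by
    intro N
    induction N using Nat.strong_induction_on with
    | _ N ih =>
      by_cases hNM : N < M
      · have : Finset.Ico M (N + 1) = ∅ := Finset.Ico_eq_empty (by omega)
        rw [this, Finset.prod_empty, mul_one]
        exact Finset.le_sup' y (Finset.mem_range.2 hNM)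
      · push_neg at hNM
        obtain ⟨n, hn, hle⟩ := hm N (le_trans hMm hNM)
        rw [Finset.mem_Ico] at hn
        have ihn := ih n hn.2
        have hprod_le : ∏ k ∈ Finset.Ico M (n + 1), (1 + 1 / (k : ℝ) ^ 2) ≤
            ∏ k ∈ Finset.Ico M N, (1 + 1 / (k : ℝ) ^ 2) := by
          have hsub : Finset.Ico M (n + 1) ⊆ Finset.Ico M N :=
            Finset.Ico_subset_Ico le_rfl (by omega)
          rw [← Finset.prod_sdiff hsub]
          have h1 : (1 : ℝ) ≤ ∏ k ∈ Finset.Ico M N \ Finset.Ico M (n + 1), (1 + 1 / (k : ℝ) ^ 2) :=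
            by
              have := Finset.prod_le_prod (s := (Finset.Ico M N \ Finset.Ico M (n + 1) : Finset ℕ))
                (f := fun _ => (1 : ℝ)) (g := fun k : ℕ => 1 + 1 / (k : ℝ) ^ 2)
                (fun k _ => zero_le_one) (fun k _ => hfac k)
              simpa using this
          have h2 : (0 : ℝ) ≤ ∏ k ∈ Finset.Ico M (n + 1), (1 + 1 / (k : ℝ) ^ 2) :=
            Finset.prod_nonneg fun k _ => le_trans zero_le_one (hfac k)
          nlinarith
        have hsplit : ∏ k ∈ Finset.Ico M (N + 1), (1 + 1 / (k : ℝ) ^ 2) =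
            (∏ k ∈ Finset.Ico M N, (1 + 1 / (k : ℝ) ^ 2)) * (1 + 1 / (N : ℝ) ^ 2) :=
          Finset.prod_Ico_succ_top hNM _
        have hfN : (0 : ℝ) < 1 + 1 / (N : ℝ) ^ 2 := lt_of_lt_of_le one_pos (hfac N)
        calc y N ≤ (1 + 1 / (N : ℝ) ^ 2) * y n := hle
          _ ≤ (1 + 1 / (N : ℝ) ^ 2) * (B * ∏ k ∈ Finset.Ico M (n + 1), (1 + 1 / (k : ℝ) ^ 2)) :=
              mul_le_mul_of_nonneg_left ihn (le_of_lt hfN)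
          _ ≤ (1 + 1 / (N : ℝ) ^ 2) * (B * ∏ k ∈ Finset.Ico M N, (1 + 1 / (k : ℝ) ^ 2)) :=
              mul_le_mul_of_nonneg_left
                (mul_le_mul_of_nonneg_left hprod_le (le_of_lt hBpos)) (le_of_lt hfN)
          _ = B * ∏ k ∈ Finset.Ico M (N + 1), (1 + 1 / (k : ℝ) ^ 2) := by
              rw [hsplit]; ring
  have hbdd : ∀ N, y N ≤ B * Real.exp 2 := by
    intro N
    refine le_trans (key N) ?_
    apply mul_le_mul_of_nonneg_left _ (le_of_lt hBpos)
    have hsum2 : ∑ k ∈ Finset.Ico M (N + 1), (1 : ℝ) / (k : ℝ) ^ 2 ≤ 2 := by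
      have hs1 : ∑ k ∈ Finset.Ico M (N + 1), (1 : ℝ) / (k : ℝ) ^ 2 ≤
          ∑ k ∈ Finset.Ico 1 (N + 2), (1 : ℝ) / (k : ℝ) ^ 2 := by
        apply Finset.sum_le_sum_of_subset_of_nonneg
        · exact Finset.Ico_subset_Ico hM1 (by omega)
        · intro k _ _; positivity
      have hs2 := sq_sum_le N
      have hp : (0 : ℝ) < 1 / ((N : ℝ) + 1) := by positivity
      linarith
    calc ∏ k ∈ Finset.Ico M (N + 1), (1 + 1 / (k : ℝ) ^ 2)
        ≤ ∏ k ∈ Finset.Ico M (N + 1), Real.exp ((1 : ℝ) / (k : ℝ) ^ 2) := by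
          apply Finset.prod_le_prod
          · intro k _; exact le_trans zero_le_one (hfac k)
          · intro k _; rw [add_comm]; exact Real.add_one_le_exp _
      _ = Real.exp (∑ k ∈ Finset.Ico M (N + 1), (1 : ℝ) / (k : ℝ) ^ 2) := (Real.exp_sum _ _).symm
      _ ≤ Real.exp 2 := Real.exp_le_exp.2 hsum2
  obtain ⟨n, hn⟩ := hunbdd (B * Real.exp 2)
  exact absurd (hbdd n) (not_le.2 hn)
end

section
/- Let {a_n} and {b_n} be sequences of positive integers with a_n non-decreasing, a_n ≥ n^{1+ε} for some ε > 0 and all large n, b_n ≤ 2^{(log₂ a_n)^κ} for some 0 < κ < 1 and all large n. Then there exists γ > 0, independent of N, such that for all sufficiently large N, Σ_{n=N}^∞ b_n/a_n ≤ a_N^{−γ}. -/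
open Filter Real

theorem stmt8 (a b : ℕ → ℕ) (hapos : ∀ n, 0 < a n) (hbpos : ∀ n, 0 < b n)
    (hmono : Monotone a)
    (ε : ℝ) (hε : 0 < ε) (hgrow : ∀ᶠ n : ℕ in atTop, (n : ℝ) ^ (1 + ε) ≤ (a n : ℝ))
    (κ : ℝ) (hκ0 : 0 < κ) (hκ1 : κ < 1)
    (hbbd : ∀ᶠ n : ℕ in atTop, (b n : ℝ) ≤ 2 ^ (Real.logb 2 (a n) ^ κ)) :
    ∃ γ : ℝ, 0 < γ ∧ ∀ᶠ N : ℕ in atTop,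
      (∑' n : ℕ, (b (N + n) : ℝ) / (a (N + n) : ℝ)) ≤ (a N : ℝ) ^ (-γ) := by
  have hε1 : (0:ℝ) < 1 + ε := by linarith
  set γ : ℝ := ε / (4 * (1 + ε)) with hγdef
  have hγpos : 0 < γ := by positivity
  refine ⟨γ, hγpos, ?_⟩
  set s : ℝ := 1 + ε / 2 with hsdef
  have hs1 : 1 < s := by rw [hsdef]; linarith
  have hkey : (1 + ε) * (2 * γ - 1) = -s := by
    rw [hγdef, hsdef]; field_simp; ring
  have h2γ : 2 * γ - 1 ≤ 0 := by
    nlinarith [hγpos, hε1]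
  have ha1 : ∀ n, (1:ℝ) ≤ (a n : ℝ) := fun n => by exact_mod_cast hapos n
  -- a n → ∞
  have hatop : Tendsto (fun n => (a n : ℝ)) atTop atTop := by
    apply tendsto_atTop_mono' atTop hgrow
    exact (tendsto_rpow_atTop hε1).comp tendsto_natCast_atTop_atTop
  have hLtop : Tendsto (fun n => Real.logb 2 (a n)) atTop atTop :=
    (Real.tendsto_logb_atTop (by norm_num : (1:ℝ) < 2)).comp hatop
  -- eventually b n ≤ (a n) ^ γ
  have hbound : ∀ᶠ n : ℕ in atTop, (b n : ℝ) ≤ (a n : ℝ) ^ γ := by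
    filter_upwards [hbbd, hLtop.eventually_ge_atTop (max 1 (γ ^ (1/(κ-1))))] with n hb hM
    set L := Real.logb 2 (a n) with hLdef
    have hL1 : (1:ℝ) ≤ L := le_trans (le_max_left _ _) hM
    have hLpos : 0 < L := by linarith
    have hexp : L ^ (κ - 1) ≤ γ := by
      have hγL : γ ^ (1/(κ-1)) ≤ L := le_trans (le_max_right _ _) hM
      have hγ' : (0:ℝ) < γ ^ (1/(κ-1)) := Real.rpow_pos_of_pos hγpos _
      have := Real.rpow_le_rpow_of_nonpos hγ' hγL (by linarith : κ - 1 ≤ 0)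
      calc L ^ (κ - 1) ≤ (γ ^ (1/(κ-1))) ^ (κ-1) := this
        _ = γ := by
            rw [← Real.rpow_mul hγpos.le, one_div,
              inv_mul_cancel₀ (by linarith : κ - 1 ≠ 0), Real.rpow_one]
    have h2L : (2:ℝ) ^ (L ^ κ) = (a n : ℝ) ^ (L ^ (κ - 1)) := by
      have : L ^ κ = L * L ^ (κ - 1) := by
        nth_rewrite 1 [show κ = 1 + (κ - 1) by ring]
        rw [Real.rpow_add hLpos, Real.rpow_one]
      rw [this, Real.rpow_mul (by norm_num : (0:ℝ) ≤ 2),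
        Real.rpow_logb (by positivity) (by norm_num) (by exact_mod_cast hapos n)]
    calc (b n : ℝ) ≤ 2 ^ (L ^ κ) := hb
      _ = (a n : ℝ) ^ (L ^ (κ - 1)) := h2L
      _ ≤ (a n : ℝ) ^ γ := Real.rpow_le_rpow_of_exponent_le (ha1 n) hexp
  -- summability of the comparison series
  have hsum_f : Summable (fun n : ℕ => (n:ℝ) ^ (-s)) :=
    Real.summable_nat_rpow.mpr (by linarith)
  have htail : Tendsto (fun N : ℕ => ∑' k : ℕ, ((k + N : ℕ) : ℝ) ^ (-s)) atTop (nhds 0) :=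
    tendsto_sum_nat_add (fun n : ℕ => (n:ℝ) ^ (-s))
  obtain ⟨N₀, hN₀⟩ := eventually_atTop.mp (hgrow.and hbound)
  filter_upwards [htail.eventually_le_const (by norm_num : (0:ℝ) < 1),
    eventually_ge_atTop N₀, eventually_ge_atTop 1] with N htl hNN₀ hN1
  have haN : 0 < (a N : ℝ) := by exact_mod_cast hapos N
  have hcpos : 0 < (a N : ℝ) ^ (-γ) := Real.rpow_pos_of_pos haN _
  -- pointwise bound
  have hpt : ∀ k : ℕ, (b (N + k) : ℝ) / (a (N + k) : ℝ) ≤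
      (a N : ℝ) ^ (-γ) * ((k + N : ℕ) : ℝ) ^ (-s) := by
    intro k
    set m := N + k with hmdef
    have hmge : N₀ ≤ m := le_trans hNN₀ (Nat.le_add_right N k)
    have hm1 : (1:ℝ) ≤ (m:ℝ) := by exact_mod_cast le_trans hN1 (Nat.le_add_right N k)
    have hg := (hN₀ m hmge).1
    have hbm := (hN₀ m hmge).2
    have hampos : (0:ℝ) < (a m : ℝ) := by exact_mod_cast hapos m
    have haNm : (a N : ℝ) ≤ (a m : ℝ) := by
      exact_mod_cast hmono (Nat.le_add_right N k)
    calc (b m : ℝ) / (a m : ℝ) ≤ (a m : ℝ) ^ γ / (a m : ℝ) := by gcongr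
      _ = (a m : ℝ) ^ (γ - 1) := by
          rw [Real.rpow_sub hampos, Real.rpow_one]
      _ = (a m : ℝ) ^ (-γ) * (a m : ℝ) ^ (2 * γ - 1) := by
          rw [← Real.rpow_add hampos]; ring_nf
      _ ≤ (a N : ℝ) ^ (-γ) * ((m:ℝ) ^ (1 + ε)) ^ (2 * γ - 1) := by
          apply mul_le_mul
          · exact Real.rpow_le_rpow_of_nonpos haN haNm (by linarith)
          · exact Real.rpow_le_rpow_of_nonpos (by positivity) hg h2γ
          · positivity
          · positivity
      _ = (a N : ℝ) ^ (-γ) * ((k + N : ℕ) : ℝ) ^ (-s) := by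
          rw [← Real.rpow_mul (by positivity : (0:ℝ) ≤ (m:ℝ)), hkey]
          congr 2
          push_cast [hmdef]
          ring
  have hsum_g : Summable (fun k : ℕ => ((k + N : ℕ) : ℝ) ^ (-s)) := by
    exact_mod_cast (summable_nat_add_iff N).mpr hsum_f
  have hsum_lhs : Summable (fun k : ℕ => (b (N + k) : ℝ) / (a (N + k) : ℝ)) := by
    apply Summable.of_nonneg_of_le (fun k => by positivity) hpt
    exact hsum_g.mul_left _
  calc (∑' k : ℕ, (b (N + k) : ℝ) / (a (N + k) : ℝ))
      ≤ ∑' k : ℕ, (a N : ℝ) ^ (-γ) * ((k + N : ℕ) : ℝ) ^ (-s) :=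
        Summable.tsum_le_tsum hpt hsum_lhs (hsum_g.mul_left _)
    _ = (a N : ℝ) ^ (-γ) * ∑' k : ℕ, ((k + N : ℕ) : ℝ) ^ (-s) := tsum_mul_left
    _ ≤ (a N : ℝ) ^ (-γ) * 1 := by
        exact mul_le_mul_of_nonneg_left htl hcpos.le
    _ = (a N : ℝ) ^ (-γ) := mul_one _
end

section
/- Let {a_n} and {b_n} be sequences of positive integers with a_n non-decreasing, a_n ≥ 2^n for all large n, and b_n ≤ 2^{(log₂ a_n)^κ} for some fixed 0 < κ < 1 and all large n. Then there exists a fixed 0 < Γ < 1 such that for all sufficiently large N, Σ_{n=N}^∞ b_n/a_n ≤ 2^{(log₂ a_N)^Γ} / a_N. -/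
open Filter Real
open scoped NNReal

private lemma aux_rpow_subadd {p : ℝ} (hp0 : 0 ≤ p) (hp1 : p ≤ 1) {x y : ℝ}
    (hx : 0 ≤ x) (hy : 0 ≤ y) : (x + y) ^ p ≤ x ^ p + y ^ p := by
  have h := NNReal.rpow_add_le_add_rpow x.toNNReal y.toNNReal hp0 hp1
  have hc : ((x.toNNReal + y.toNNReal : ℝ≥0) : ℝ) = x + y := by
    simp [Real.coe_toNNReal, hx, hy]
  calc (x + y) ^ p = ((x.toNNReal + y.toNNReal : ℝ≥0) : ℝ) ^ p := by rw [hc]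
    _ = (((x.toNNReal + y.toNNReal : ℝ≥0) ^ p : ℝ≥0) : ℝ) := by
        rw [NNReal.coe_rpow]
    _ ≤ ((x.toNNReal ^ p + y.toNNReal ^ p : ℝ≥0) : ℝ) := by exact_mod_cast h
    _ = x ^ p + y ^ p := by
        push_cast [NNReal.coe_rpow, Real.coe_toNNReal _ hx, Real.coe_toNNReal _ hy]
        ring

private lemma aux_rpow_le_half_add {κ : ℝ} (hκ0 : 0 < κ) (hκ1 : κ < 1) {z : ℝ} (hz : 0 ≤ z) :
    z ^ κ ≤ z / 2 + 2 ^ ((1:ℝ)/(1-κ)) := by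
  set M : ℝ := 2 ^ ((1:ℝ)/(1-κ)) with hM
  have hM1 : (1:ℝ) ≤ M := Real.one_le_rpow (by norm_num) (div_nonneg zero_le_one (by linarith))
  have hMpow : M ^ (1 - κ) = 2 := by
    rw [hM, ← Real.rpow_mul (by norm_num), one_div,
      inv_mul_cancel₀ (by linarith : (1:ℝ) - κ ≠ 0), Real.rpow_one]
  rcases le_or_gt z M with h | h
  · have : z ^ κ ≤ M ^ κ := Real.rpow_le_rpow hz h hκ0.le
    have h2 : M ^ κ ≤ M ^ (1:ℝ) := Real.rpow_le_rpow_of_exponent_le hM1 hκ1.le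
    rw [Real.rpow_one] at h2
    have : z / 2 ≥ 0 := by linarith
    linarith
  · have hz0 : 0 < z := lt_of_lt_of_le (by linarith) h.le
    have h2 : (2:ℝ) ≤ z ^ (1 - κ) := by
      rw [← hMpow]
      exact Real.rpow_le_rpow (by linarith) h.le (by linarith)
    have hsplit : z ^ κ * z ^ (1 - κ) = z := by
      rw [← Real.rpow_add hz0, add_sub_cancel, Real.rpow_one]
    have hzκ : 0 ≤ z ^ κ := Real.rpow_nonneg hz0.le _
    nlinarith

private lemma aux_keyA {κ : ℝ} (hκ0 : 0 < κ) (hκ1 : κ < 1) {x y : ℝ}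
    (hy : 0 ≤ y) (hxy : y ≤ x) :
    y - y ^ κ + (x - y)/2 - 2 ^ ((1:ℝ)/(1-κ)) ≤ x - x ^ κ := by
  have h1 : x ^ κ ≤ y ^ κ + (x - y) ^ κ := by
    have := aux_rpow_subadd hκ0.le hκ1.le hy (by linarith : (0:ℝ) ≤ x - y)
    simpa using this
  have h2 := aux_rpow_le_half_add hκ0 hκ1 (by linarith : (0:ℝ) ≤ x - y)
  linarith

set_option maxHeartbeats 1000000 in
theorem stmt9 (a b : ℕ → ℕ) (hapos : ∀ n, 0 < a n) (hbpos : ∀ n, 0 < b n)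
    (hmono : Monotone a)
    (hgeom : ∀ᶠ n : ℕ in atTop, 2 ^ n ≤ a n)
    (κ : ℝ) (hκ0 : 0 < κ) (hκ1 : κ < 1)
    (hbbd : ∀ᶠ n : ℕ in atTop, (b n : ℝ) ≤ 2 ^ (Real.logb 2 (a n) ^ κ)) :
    ∃ Γ : ℝ, 0 < Γ ∧ Γ < 1 ∧ ∀ᶠ N : ℕ in atTop,
      (∑' n : ℕ, (b (N + n) : ℝ) / (a (N + n) : ℝ))
        ≤ 2 ^ (Real.logb 2 (a N) ^ Γ) / (a N : ℝ) := by
  obtain ⟨N₁, hN₁⟩ := eventually_atTop.mp hgeom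
  obtain ⟨N₂, hN₂⟩ := eventually_atTop.mp hbbd
  set Γ : ℝ := (1 + κ)/2 with hΓdef
  have hκΓ : κ < Γ := by rw [hΓdef]; linarith
  have hΓ1 : Γ < 1 := by rw [hΓdef]; linarith
  have hΓ0 : 0 < Γ := by rw [hΓdef]; linarith
  set M : ℝ := 2 ^ ((1:ℝ)/(1-κ)) with hMdef
  have hM0 : 0 < M := Real.rpow_pos_of_pos (by norm_num) _
  set C : ℝ := 4 / (κ * Real.log 2) with hCdef
  have hC0 : 0 < C := by
    apply div_pos (by norm_num)
    exact mul_pos hκ0 (Real.log_pos (by norm_num))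
  set T : ℝ := max (max 5 ((2 + M) ^ ((1:ℝ)/(Γ - κ)))) (C ^ ((2:ℝ)/κ)) with hTdef
  refine ⟨Γ, hΓ0, hΓ1, ?_⟩
  rw [eventually_atTop]
  refine ⟨max (max N₁ N₂) (⌈T⌉₊ + 1), fun N hN => ?_⟩
  have hNN₁ : N₁ ≤ N := le_trans (le_trans (le_max_left _ _) (le_max_left _ _)) hN
  have hNN₂ : N₂ ≤ N := le_trans (le_trans (le_max_right _ _) (le_max_left _ _)) hN
  have hNT : T ≤ (N:ℝ) := by
    have h1 : (⌈T⌉₊ : ℝ) ≤ N := by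
      exact_mod_cast le_trans (le_trans (Nat.le_succ _) (le_max_right _ _)) hN
    exact le_trans (Nat.le_ceil T) h1
  set y : ℝ := Real.logb 2 (a N) with hydef
  have ha1 : ∀ m, (1:ℝ) ≤ (a m : ℝ) := fun m => by exact_mod_cast hapos m
  have haL : ∀ m, (a m : ℝ) = 2 ^ (Real.logb 2 (a m)) := fun m =>
    (Real.rpow_logb (by norm_num) (by norm_num) (by exact_mod_cast hapos m)).symm
  have hLm : ∀ m, N ≤ m → (m:ℝ) ≤ Real.logb 2 (a m) := by
    intro m hm
    have h2m : ((2:ℕ)^m : ℝ) ≤ (a m : ℝ) := by exact_mod_cast hN₁ m (le_trans hNN₁ hm)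
    have : Real.logb 2 ((2:ℝ)^(m:ℕ)) ≤ Real.logb 2 (a m) := by
      apply Real.logb_le_logb_of_le (by norm_num) (by positivity)
      · exact_mod_cast h2m
    rwa [← Real.rpow_natCast 2 m, Real.logb_rpow (by norm_num) (by norm_num)] at this
  have hyN : (N:ℝ) ≤ y := hLm N le_rfl
  have hyT : T ≤ y := le_trans hNT hyN
  have hy5 : (5:ℝ) ≤ y :=
    le_trans (le_trans (le_max_left _ _) (le_max_left _ _)) hyT
  have hy1 : (1:ℝ) ≤ y := by linarith
  have hLy : ∀ m, N ≤ m → y ≤ Real.logb 2 (a m) := fun m hm =>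
    Real.logb_le_logb_of_le (by norm_num) (by exact_mod_cast hapos N)
      (by exact_mod_cast hmono hm)
  -- key threshold facts
  have hyκ1 : (1:ℝ) ≤ y ^ κ := Real.one_le_rpow hy1 hκ0.le
  have fact2 : M + 2 * y ^ κ ≤ y ^ Γ := by
    have hT2 : (2 + M) ^ ((1:ℝ)/(Γ - κ)) ≤ y :=
      le_trans (le_trans (le_max_right _ _) (le_max_left _ _)) hyT
    have h1 : 2 + M ≤ y ^ (Γ - κ) := by
      have := Real.rpow_le_rpow (by positivity) hT2 (by linarith : (0:ℝ) ≤ Γ - κ)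
      rwa [← Real.rpow_mul (by positivity), one_div,
        inv_mul_cancel₀ (by linarith : Γ - κ ≠ 0), Real.rpow_one] at this
    have hsplit : y ^ κ * y ^ (Γ - κ) = y ^ Γ := by
      rw [← Real.rpow_add (by linarith : (0:ℝ) < y), add_sub_cancel]
    nlinarith
  have fact1 : y + 5 ≤ 2 ^ (y ^ κ) := by
    have hyκ2 : C ≤ y ^ (κ/2) := by
      have hT1 : C ^ ((2:ℝ)/κ) ≤ y := le_trans (le_max_right _ _) hyT
      have := Real.rpow_le_rpow (by positivity) hT1 (by linarith : (0:ℝ) ≤ κ/2)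
      rwa [← Real.rpow_mul hC0.le, div_mul_div_comm, mul_comm (2:ℝ) κ,
        div_self (by intro h; nlinarith : κ * 2 ≠ 0), Real.rpow_one] at this
    have hlog : Real.log (y + 5) ≤ (4/κ) * y ^ (κ/2) := by
      have e1 : Real.log (y + 5) = (2/κ) * Real.log ((y+5) ^ (κ/2)) := by
        rw [Real.log_rpow (by linarith)]; field_simp
      have e2 : Real.log ((y+5) ^ (κ/2)) ≤ (y+5) ^ (κ/2) := by
        have h0 : (0:ℝ) < (y+5) ^ (κ/2) :=
          Real.rpow_pos_of_pos (by linarith : (0:ℝ) < y + 5) _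
        linarith [Real.log_le_sub_one_of_pos h0]
      have e3 : (y+5) ^ (κ/2) ≤ (2*y) ^ (κ/2) :=
        Real.rpow_le_rpow (by linarith) (by linarith) (by linarith : (0:ℝ) ≤ κ/2)
      have e4 : (2*y) ^ (κ/2) = 2 ^ (κ/2) * y ^ (κ/2) :=
        Real.mul_rpow (by norm_num) (by linarith)
      have e5 : (2:ℝ) ^ (κ/2) ≤ 2 := by
        calc (2:ℝ) ^ (κ/2) ≤ (2:ℝ) ^ (1:ℝ) :=
              Real.rpow_le_rpow_of_exponent_le (by norm_num) (by linarith)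
          _ = 2 := Real.rpow_one 2
      have e6 : (0:ℝ) ≤ y ^ (κ/2) := Real.rpow_nonneg (by linarith) _
      calc Real.log (y + 5) = (2/κ) * Real.log ((y+5) ^ (κ/2)) := e1
        _ ≤ (2/κ) * ((2*y) ^ (κ/2)) := by
            apply mul_le_mul_of_nonneg_left (le_trans e2 e3) (by positivity)
        _ = (2/κ) * (2 ^ (κ/2) * y ^ (κ/2)) := by rw [e4]
        _ ≤ (2/κ) * (2 * y ^ (κ/2)) := by
            apply mul_le_mul_of_nonneg_left _ (by positivity)
            exact mul_le_mul_of_nonneg_right e5 e6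
        _ = (4/κ) * y ^ (κ/2) := by ring
    have hlogb : Real.logb 2 (y + 5) ≤ y ^ κ := by
      rw [Real.logb, div_le_iff₀ (Real.log_pos (by norm_num))]
      have e7 : (4/κ) * y ^ (κ/2) = (C * y ^ (κ/2)) * Real.log 2 := by
        rw [hCdef]; field_simp
      have e8 : C * y ^ (κ/2) ≤ y ^ (κ/2) * y ^ (κ/2) := by
        apply mul_le_mul_of_nonneg_right hyκ2 (Real.rpow_nonneg (by linarith) _)
      have e9 : y ^ (κ/2) * y ^ (κ/2) = y ^ κ := by
        rw [← Real.rpow_add (by linarith : (0:ℝ) < y)]; ring_nf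
      calc Real.log (y + 5) ≤ (4/κ) * y ^ (κ/2) := hlog
        _ = (C * y ^ (κ/2)) * Real.log 2 := e7
        _ ≤ y ^ κ * Real.log 2 := by
            apply mul_le_mul_of_nonneg_right _ (Real.log_pos (by norm_num)).le
            rw [← e9]; exact e8
    calc y + 5 = 2 ^ (Real.logb 2 (y + 5)) :=
          (Real.rpow_logb (by norm_num) (by norm_num) (by linarith)).symm
      _ ≤ 2 ^ (y ^ κ) := Real.rpow_le_rpow_of_exponent_le (by norm_num) hlogb
  -- the weight function
  set E : ℝ := M + y ^ κ - y with hEdef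
  set w : ℕ → ℝ := fun n => (2:ℝ) ^ (-(max 0 ((n:ℝ) - y))/2) with hwdef
  have hw_nonneg : ∀ n, 0 ≤ w n := fun n => Real.rpow_nonneg (by norm_num) _
  have hw_le_one : ∀ n, w n ≤ 1 := by
    intro n
    rw [hwdef]
    calc (2:ℝ) ^ (-(max 0 ((n:ℝ) - y))/2) ≤ (2:ℝ) ^ (0:ℝ) := by
          apply Real.rpow_le_rpow_of_exponent_le (by norm_num)
          have := le_max_left (0:ℝ) ((n:ℝ) - y)
          linarith
      _ = 1 := Real.rpow_zero 2
  set q : ℝ := (2:ℝ) ^ (-(1:ℝ)/2) with hqdef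
  have hq0 : 0 ≤ q := Real.rpow_nonneg (by norm_num) _
  have hq1 : q < 1 := by
    rw [hqdef]
    calc (2:ℝ) ^ (-(1:ℝ)/2) < (2:ℝ) ^ (0:ℝ) :=
          Real.rpow_lt_rpow_of_exponent_lt (by norm_num) (by norm_num)
      _ = 1 := Real.rpow_zero 2
  have hqpow : ∀ k : ℕ, q ^ k = (2:ℝ) ^ (-(k:ℝ)/2) := by
    intro k
    rw [hqdef, ← Real.rpow_natCast ((2:ℝ) ^ (-(1:ℝ)/2)) k,
      ← Real.rpow_mul (by norm_num)]
    congr 1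
    ring
  have hw_summable : Summable w := by
    refine Summable.of_nonneg_of_le hw_nonneg (fun n => ?_)
      ((summable_geometric_of_lt_one hq0 hq1).mul_left ((2:ℝ)^(y/2)))
    rw [hwdef, hqpow, ← Real.rpow_add (by norm_num)]
    apply Real.rpow_le_rpow_of_exponent_le (by norm_num)
    have := le_max_right (0:ℝ) ((n:ℝ) - y)
    linarith
  have hq34 : q ≤ 3/4 := by
    have hq2 : q * q = 1/2 := by
      rw [hqdef, ← Real.rpow_add (by norm_num)]
      norm_num
    nlinarith
  have hsum_w : ∑' n, w n ≤ y + 5 := by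
    set K : ℕ := ⌈y⌉₊ with hKdef
    have hKy : (K:ℝ) ≤ y + 1 := by
      have := Nat.ceil_lt_add_one (by linarith : (0:ℝ) ≤ y)
      linarith
    have hyK : y ≤ K := Nat.le_ceil y
    rw [← Summable.sum_add_tsum_nat_add K hw_summable]
    have head : ∑ i ∈ Finset.range K, w i ≤ K := by
      calc ∑ i ∈ Finset.range K, w i ≤ ∑ i ∈ Finset.range K, 1 :=
            Finset.sum_le_sum (fun i _ => hw_le_one i)
        _ = K := by simp
    have tail : ∑' j : ℕ, w (j + K) ≤ 4 := by
      have hle : ∀ j : ℕ, w (j + K) ≤ q ^ j := by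
        intro j
        rw [hwdef, hqpow]
        apply Real.rpow_le_rpow_of_exponent_le (by norm_num)
        have h1 : (j:ℝ) ≤ ((j + K : ℕ):ℝ) - y := by
          push_cast; linarith
        have h2 : (j:ℝ) ≤ max 0 (((j + K : ℕ):ℝ) - y) := le_trans h1 (le_max_right _ _)
        linarith
      have hsum : ∑' j : ℕ, w (j + K) ≤ ∑' j : ℕ, q ^ j := by
        apply Summable.tsum_le_tsum hle ((summable_nat_add_iff K).mpr hw_summable)
          (summable_geometric_of_lt_one hq0 hq1)
      rw [tsum_geometric_of_lt_one hq0 hq1] at hsum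
      have : (1 - q)⁻¹ ≤ 4 := by
        rw [inv_le_comm₀ (by linarith) (by norm_num)]
        linarith
      linarith
    linarith
  -- pointwise bound for the terms
  have hterm : ∀ n : ℕ, (b (N + n) : ℝ) / (a (N + n) : ℝ) ≤ 2 ^ E * w n := by
    intro n
    set m := N + n with hm
    set x : ℝ := Real.logb 2 (a m) with hxdef
    have hxy : y ≤ x := hLy m (Nat.le_add_right _ _)
    have hxm : (m:ℝ) ≤ x := hLm m (Nat.le_add_right _ _)
    have hxn : (n:ℝ) ≤ x := by
      have : (n:ℝ) ≤ (m:ℝ) := by rw [hm]; push_cast; linarith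
      linarith
    have hb' : (b m : ℝ) ≤ 2 ^ (x ^ κ) := hN₂ m (le_trans hNN₂ (Nat.le_add_right _ _))
    have ham : (0:ℝ) < (a m : ℝ) := by exact_mod_cast hapos m
    have h1 : (b m : ℝ) / (a m : ℝ) ≤ 2 ^ (x ^ κ) / (a m : ℝ) := by
      gcongr
    have h2 : (2:ℝ) ^ (x ^ κ) / (a m : ℝ) = 2 ^ (x ^ κ - x) := by
      rw [Real.rpow_sub (by norm_num : (0:ℝ) < 2)]
      congr 1
      exact haL m
    have hexp : x ^ κ - x ≤ E + (-(max 0 ((n:ℝ) - y))/2) := by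
      have hkey := aux_keyA hκ0 hκ1 (by linarith : (0:ℝ) ≤ y) hxy
      have hmax : max 0 ((n:ℝ) - y) ≤ x - y := by
        apply max_le (by linarith) (by linarith)
      rw [← hMdef] at hkey
      rw [hEdef]
      linarith
    have h3 : (2:ℝ) ^ (x ^ κ - x) ≤ 2 ^ (E + (-(max 0 ((n:ℝ) - y))/2)) :=
      Real.rpow_le_rpow_of_exponent_le (by norm_num) hexp
    have h4 : (2:ℝ) ^ (E + (-(max 0 ((n:ℝ) - y))/2)) = 2 ^ E * w n := by
      rw [Real.rpow_add (by norm_num : (0:ℝ) < 2), hwdef]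
    calc (b m : ℝ) / (a m : ℝ) ≤ 2 ^ (x ^ κ) / (a m : ℝ) := h1
      _ = 2 ^ (x ^ κ - x) := h2
      _ ≤ 2 ^ (E + (-(max 0 ((n:ℝ) - y))/2)) := h3
      _ = 2 ^ E * w n := h4
  -- assemble
  have hg_summable : Summable (fun n => (2:ℝ) ^ E * w n) := hw_summable.mul_left _
  have hterm_summable : Summable (fun n : ℕ => (b (N + n) : ℝ) / (a (N + n) : ℝ)) := by
    apply Summable.of_nonneg_of_le (fun n => by positivity) hterm hg_summable
  have hE0 : (0:ℝ) ≤ (2:ℝ) ^ E := Real.rpow_nonneg (by norm_num) _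
  calc (∑' n : ℕ, (b (N + n) : ℝ) / (a (N + n) : ℝ))
      ≤ ∑' n : ℕ, (2:ℝ) ^ E * w n := Summable.tsum_le_tsum hterm hterm_summable hg_summable
    _ = (2:ℝ) ^ E * ∑' n, w n := tsum_mul_left
    _ ≤ (2:ℝ) ^ E * (y + 5) := by
        apply mul_le_mul_of_nonneg_left hsum_w hE0
    _ ≤ (2:ℝ) ^ E * 2 ^ (y ^ κ) := by
        apply mul_le_mul_of_nonneg_left fact1 hE0
    _ = (2:ℝ) ^ (E + y ^ κ) := (Real.rpow_add (by norm_num) _ _).symm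
    _ ≤ (2:ℝ) ^ (y ^ Γ - y) := by
        apply Real.rpow_le_rpow_of_exponent_le (by norm_num)
        rw [hEdef]
        linarith
    _ = 2 ^ (y ^ Γ) / (a N : ℝ) := by
        rw [Real.rpow_sub (by norm_num : (0:ℝ) < 2)]
        congr 1
        exact (haL N).symm
end

section
/- Let M ≥ 0 and let {a_n} be a non-decreasing sequence of positive integers with limsup a_n^{1/(M+2)^n} = ∞. Then for every positive integer k there are infinitely many N > k such that a_N > (1 + 1/N²)^{(M+2)^N} · ( max_{k ≤ n < N} a_n^{(M+2)^{−n}} )^{(M+2)^N}, and for such N one moreover has a_N > (1 + 1/N²)^{(M+2)^N} · ∏_{n=k}^{N−1} a_n^{M+1}. -/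
open Filter Real

private lemma rpow_sum_eq' {x : ℝ} (hx : 0 < x) (s : Finset ℕ) (f : ℕ → ℝ) :
    x ^ (∑ i ∈ s, f i) = ∏ i ∈ s, x ^ f i := by
  classical
  induction s using Finset.cons_induction with
  | empty => simp
  | cons a s ha ih => rw [Finset.sum_cons, Finset.prod_cons, Real.rpow_add hx, ih]

theorem stmt10 (M : ℝ) (hM : 0 ≤ M) (a : ℕ → ℕ) (hapos : ∀ n, 0 < a n)
    (hmono : Monotone a)
    (hlimsup : ∀ C : ℝ, ∃ᶠ n : ℕ in atTop, C < (a n : ℝ) ^ (((M + 2) ^ n)⁻¹))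
    (k : ℕ) (hk : 1 ≤ k) :
    ∃ᶠ N : ℕ in atTop, k < N ∧
      (sSup {x : ℝ | ∃ n, k ≤ n ∧ n < N ∧ x = (a n : ℝ) ^ (((M + 2) ^ n)⁻¹)})
          ^ ((M + 2) ^ N) * (1 + 1 / (N : ℝ) ^ 2) ^ ((M + 2) ^ N) < (a N : ℝ) ∧
      (1 + 1 / (N : ℝ) ^ 2) ^ ((M + 2) ^ N)
          * ∏ n ∈ Finset.Ico k N, (a n : ℝ) ^ (M + 1) < (a N : ℝ) := by
  classical
  have hM2pos : (0:ℝ) < M + 2 := by linarith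
  set b : ℕ → ℝ := fun n => (a n : ℝ) ^ (((M + 2) ^ n)⁻¹) with hbdef
  have hb : ∀ n : ℕ, b n = (a n : ℝ) ^ (((M + 2) ^ n)⁻¹) := fun n => rfl
  have hEpos : ∀ n : ℕ, (0:ℝ) < (M + 2) ^ n := fun n => pow_pos hM2pos n
  have hb1 : ∀ n, (1:ℝ) ≤ b n := fun n =>
    Real.one_le_rpow (by exact_mod_cast hapos n) (inv_nonneg.mpr (hEpos n).le)
  have hbpos : ∀ n, (0:ℝ) < b n := fun n => lt_of_lt_of_le one_pos (hb1 n)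
  have hba : ∀ n, b n ^ ((M + 2) ^ n) = (a n : ℝ) := by
    intro n
    rw [hb, ← Real.rpow_mul (Nat.cast_nonneg _), inv_mul_cancel₀ (hEpos n).ne',
      Real.rpow_one]
  -- the product P
  set P : ℕ → ℝ := fun N => ∏ j ∈ Finset.range (N + 1), (1 + 1 / (j : ℝ) ^ 2) with hPdef
  have hPfac : ∀ j : ℕ, (1:ℝ) ≤ 1 + 1 / (j : ℝ) ^ 2 := fun j => le_add_of_nonneg_right (by positivity)
  have hone_le_prod : ∀ (s : Finset ℕ), (1:ℝ) ≤ ∏ j ∈ s, (1 + 1 / (j : ℝ) ^ 2) := by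
    intro s
    calc (1:ℝ) = ∏ j ∈ s, 1 := by simp
    _ ≤ _ := Finset.prod_le_prod (by simp) (fun j _ => hPfac j)
  have hP1 : ∀ N, (1:ℝ) ≤ P N := fun N => hone_le_prod _
  have hPpos : ∀ N, (0:ℝ) < P N := fun N => lt_of_lt_of_le one_pos (hP1 N)
  -- bound on P
  have hsummable : Summable (fun n : ℕ => 1 / (n:ℝ)^2) := by
    exact_mod_cast Real.summable_one_div_nat_pow.mpr one_lt_two
  set B : ℝ := Real.exp (∑' n : ℕ, 1 / (n:ℝ)^2) with hBdef
  have hPB : ∀ N, P N ≤ B := by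
    intro N
    calc P N ≤ ∏ j ∈ Finset.range (N + 1), Real.exp (1 / (j:ℝ)^2) :=
          Finset.prod_le_prod (fun j _ => by positivity)
            (fun j _ => by rw [add_comm]; exact Real.add_one_le_exp _)
    _ = Real.exp (∑ j ∈ Finset.range (N + 1), 1 / (j:ℝ)^2) := (Real.exp_sum _ _).symm
    _ ≤ B := Real.exp_le_exp.mpr (Summable.sum_le_tsum _ (fun j _ => by positivity) hsummable)
  have hBpos : (0:ℝ) < B := lt_of_lt_of_le (hPpos 0) (hPB 0)
  -- ratio bound
  have hPratio : ∀ {n N : ℕ}, n < N → P n * (1 + 1 / (N : ℝ) ^ 2) ≤ P N := by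
    intro n N hnN
    have hsplit : P N = P n * ∏ j ∈ Finset.Ico (n + 1) (N + 1), (1 + 1 / (j : ℝ) ^ 2) := by
      simp only [hPdef, Finset.range_eq_Ico]
      rw [Finset.prod_Ico_consecutive _ (Nat.zero_le (n + 1)) (by omega)]
    rw [hsplit]
    have h2 : (1 + 1 / (N : ℝ) ^ 2) ≤ ∏ j ∈ Finset.Ico (n + 1) (N + 1), (1 + 1 / (j : ℝ) ^ 2) := by
      rw [Finset.prod_Ico_succ_top (by omega : n + 1 ≤ N)]
      calc (1 + 1 / (N : ℝ) ^ 2) = 1 * (1 + 1 / (N : ℝ) ^ 2) := (one_mul _).symm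
      _ ≤ _ := mul_le_mul_of_nonneg_right (hone_le_prod _) (by positivity)
    exact mul_le_mul_of_nonneg_left h2 (hPpos n).le
  -- main frequently argument
  rw [Filter.frequently_atTop]
  intro m
  set m0 : ℕ := max m (k + 1) with hm0def
  -- the max of c := b/P on [k, m0]
  set c : ℕ → ℝ := fun n => b n / P n with hcdef
  have hcpos : ∀ n, 0 < c n := fun n => div_pos (hbpos n) (hPpos n)
  have hIcc : (Finset.Icc k m0).Nonempty := Finset.nonempty_Icc.mpr (by omega)
  obtain ⟨i0, hi0mem, hi0max⟩ := Finset.exists_max_image (Finset.Icc k m0) c hIcc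
  set C0 : ℝ := c i0 with hC0def
  -- find N0 with b N0 > C0 * B
  obtain ⟨N0, hN0ge, hN0⟩ := Filter.frequently_atTop.mp (hlimsup (C0 * B)) (m0 + 1)
  have hN0c : C0 < c N0 := by
    have h1 : C0 * B < b N0 := hN0
    have h2 : b N0 / B ≤ c N0 :=
      div_le_div_of_nonneg_left (hbpos N0).le (hPpos N0) (hPB N0)
    have h3 : C0 < b N0 / B := (lt_div_iff₀ hBpos).mpr h1
    exact lt_of_lt_of_le h3 h2
  -- least maximizer of c on Icc k N0
  have hkN0 : k ≤ N0 := by omega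
  set T : Finset ℕ :=
    (Finset.Icc k N0).filter (fun n => ∀ x ∈ Finset.Icc k N0, c x ≤ c n) with hTdef
  have hTne : T.Nonempty := by
    obtain ⟨j, hjmem, hjmax⟩ :=
      Finset.exists_max_image (Finset.Icc k N0) c (Finset.nonempty_Icc.mpr hkN0)
    exact ⟨j, Finset.mem_filter.mpr ⟨hjmem, hjmax⟩⟩
  set N : ℕ := T.min' hTne with hNdef
  have hNT : N ∈ T := T.min'_mem hTne
  have hNmem : N ∈ Finset.Icc k N0 := (Finset.mem_filter.mp hNT).1
  have hNmax : ∀ x ∈ Finset.Icc k N0, c x ≤ c N := (Finset.mem_filter.mp hNT).2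
  have hNk : k ≤ N := (Finset.mem_Icc.mp hNmem).1
  have hNN0 : N ≤ N0 := (Finset.mem_Icc.mp hNmem).2
  have hcN : C0 < c N := lt_of_lt_of_le hN0c (hNmax N0 (Finset.mem_Icc.mpr ⟨hkN0, le_refl _⟩))
  have hNm0 : m0 < N := by
    by_contra h
    push_neg at h
    exact absurd (hi0max N (Finset.mem_Icc.mpr ⟨hNk, h⟩)) (not_le.mpr hcN)
  have hkN : k < N := by omega
  -- strict record property
  have hrec : ∀ n, k ≤ n → n < N → c n < c N := by
    intro n hn hnN
    have hmem : n ∈ Finset.Icc k N0 := Finset.mem_Icc.mpr ⟨hn, by omega⟩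
    rcases lt_or_eq_of_le (hNmax n hmem) with h | h
    · exact h
    · exfalso
      have hnT : n ∈ T := Finset.mem_filter.mpr ⟨hmem, fun x hx => h ▸ hNmax x hx⟩
      exact absurd (T.min'_le n hnT) (not_le.mpr hnN)
  -- key inequality
  have hkey : ∀ n, k ≤ n → n < N → b n * (1 + 1 / (N : ℝ) ^ 2) < b N := by
    intro n hn hnN
    have h1 : b n * P N < b N * P n := by
      have := hrec n hn hnN
      rw [hcdef] at this
      exact (div_lt_div_iff₀ (hPpos n) (hPpos N)).mp this
    have h2 : b n * (P n * (1 + 1 / (N : ℝ) ^ 2)) ≤ b n * P N :=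
      mul_le_mul_of_nonneg_left (hPratio hnN) (hbpos n).le
    have h3 : b n * (1 + 1 / (N : ℝ) ^ 2) * P n < b N * P n := by nlinarith
    exact lt_of_mul_lt_mul_right h3 (hPpos n).le
  -- the sup set
  have hIkoNe : (Finset.Ico k N).Nonempty := Finset.nonempty_Ico.mpr hkN
  have himNe : ((Finset.Ico k N).image b).Nonempty := hIkoNe.image b
  have hset : {x : ℝ | ∃ n, k ≤ n ∧ n < N ∧ x = (a n : ℝ) ^ (((M + 2) ^ n)⁻¹)}
      = ↑((Finset.Ico k N).image b) := by
    ext x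
    simp only [Set.mem_setOf_eq, Finset.coe_image, Set.mem_image, Finset.mem_coe,
      Finset.mem_Ico]
    constructor
    · rintro ⟨n, h1, h2, h3⟩; exact ⟨n, ⟨h1, h2⟩, (h3 ▸ (hb n).symm : b n = x)⟩
    · rintro ⟨n, ⟨h1, h2⟩, h3⟩; exact ⟨n, h1, h2, h3 ▸ (hb n)⟩
  set S : ℝ := sSup {x : ℝ | ∃ n, k ≤ n ∧ n < N ∧ x = (a n : ℝ) ^ (((M + 2) ^ n)⁻¹)}
    with hSdef
  have hSmax : S = ((Finset.Ico k N).image b).max' himNe := by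
    rw [hSdef, hset]; exact himNe.csSup_eq_max'
  obtain ⟨n0, hn0mem, hn0eq⟩ := Finset.mem_image.mp (((Finset.Ico k N).image b).max'_mem himNe)
  have hn0ico := Finset.mem_Ico.mp hn0mem
  have hSb : S = b n0 := by rw [hSmax, ← hn0eq]
  have hSub : ∀ n, k ≤ n → n < N → b n ≤ S := by
    intro n h1 h2
    rw [hSmax]
    exact Finset.le_max' _ _ (Finset.mem_image_of_mem b (Finset.mem_Ico.mpr ⟨h1, h2⟩))
  have hS1 : (1:ℝ) ≤ S := hSb ▸ hb1 n0
  have hSkey : S * (1 + 1 / (N : ℝ) ^ 2) < b N := hSb ▸ hkey n0 hn0ico.1 hn0ico.2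
  -- first inequality
  have hNpos2 : (0:ℝ) < 1 + 1 / (N : ℝ) ^ 2 := by positivity
  have hfirst : S ^ ((M + 2) ^ N) * (1 + 1 / (N : ℝ) ^ 2) ^ ((M + 2) ^ N) < (a N : ℝ) := by
    rw [← Real.mul_rpow (by linarith) hNpos2.le, ← hba N]
    exact Real.rpow_lt_rpow (by positivity) hSkey (hEpos N)
  refine ⟨N, by omega, hkN, hfirst, ?_⟩
  -- second inequality
  have hprodle : ∏ n ∈ Finset.Ico k N, (a n : ℝ) ^ (M + 1) ≤ S ^ ((M + 2) ^ N) := by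
    have step1 : ∀ n ∈ Finset.Ico k N,
        (a n : ℝ) ^ (M + 1) ≤ S ^ ((M + 2) ^ n * (M + 1)) := by
      intro n hn
      obtain ⟨h1, h2⟩ := Finset.mem_Ico.mp hn
      have : (a n : ℝ) ^ (M + 1) = b n ^ ((M + 2) ^ n * (M + 1)) := by
        rw [Real.rpow_mul (hbpos n).le, hba n]
      rw [this]
      exact Real.rpow_le_rpow (hbpos n).le (hSub n h1 h2) (by positivity)
    calc ∏ n ∈ Finset.Ico k N, (a n : ℝ) ^ (M + 1)
        ≤ ∏ n ∈ Finset.Ico k N, S ^ ((M + 2) ^ n * (M + 1)) :=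
          Finset.prod_le_prod (fun n _ => by positivity) step1
    _ = S ^ (∑ n ∈ Finset.Ico k N, (M + 2) ^ n * (M + 1)) :=
          (rpow_sum_eq' (by linarith) _ _).symm
    _ ≤ S ^ ((M + 2) ^ N) := by
          apply Real.rpow_le_rpow_of_exponent_le hS1
          rw [← Finset.sum_mul, geom_sum_Ico (by linarith : M + 2 ≠ 1) hkN.le]
          have hek : (0:ℝ) < (M + 2) ^ k := hEpos k
          have : (M + 2 - 1) = M + 1 := by ring
          rw [this]
          rw [div_mul_cancel₀ _ (by linarith : M + 1 ≠ 0)]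
          linarith
  calc (1 + 1 / (N : ℝ) ^ 2) ^ ((M + 2) ^ N) * ∏ n ∈ Finset.Ico k N, (a n : ℝ) ^ (M + 1)
      ≤ (1 + 1 / (N : ℝ) ^ 2) ^ ((M + 2) ^ N) * S ^ ((M + 2) ^ N) :=
        mul_le_mul_of_nonneg_left hprodle (by positivity)
  _ < (a N : ℝ) := by rw [mul_comm]; exact hfirst
end

section
/- Let p be a prime, d, K, N positive integers. For k = 1,…,K let α_k be a non-zero rational number with ν_p(α_k) = −e_k where e_1,…,e_K are positive integers satisfying e_k > d·e_{k−1} for all k (with e_0 = 0). Let P ∈ ℤ[x_1,…,x_K] be a non-zero polynomial of degree at most d whose leading coefficient (in colexicographic order of exponent tuples) is not divisible by p. Then P(α_1,…,α_K) ≠ 0. -/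
/-!
Give the monomial `x^i` the weight `w(i) = ∑ₖ iₖ e_{k+1}`, so that `|α^i|_p = p^{w(i)}`.
Because `e` grows by more than a factor `d` at each step, monomials of degree at most `d`
contributing only in coordinates below `m` have weight less than `e_{m+1}`; hence on such
monomials the colexicographic order is the order by weight. The colex-leading term of `P` thus
has the largest weight, and since its coefficient is a `p`-adic unit it strictly dominates every
other term in `p`-adic norm, so the sum cannot vanish.
-/

/-- Colexicographic strict order on exponent tuples: `i < j` iff at the largest
index where they differ, `i` is smaller. -/
def ColexLt {K : ℕ} (i j : Fin K →₀ ℕ) : Prop :=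
  ∃ m : Fin K, i m < j m ∧ ∀ l, m < l → i l = j l

theorem colexLt_iff_toColex_lt {K : ℕ} {i j : Fin K →₀ ℕ} :
    ColexLt i j ↔ toColex (⇑i) < toColex ⇑j :=
  ⟨fun ⟨m, hm, h⟩ => ⟨m, h, hm⟩, fun ⟨m, h, hm⟩ => ⟨m, hm, h⟩⟩

section Padic

variable {p : ℕ} [Fact p.Prime]

theorem sum_ne_zero_of_padicNorm_lt {ι : Type*} {s : Finset ι} {f : ι → ℚ} {j : ι}
    (hj : j ∈ s) (hfj : f j ≠ 0) (hlt : ∀ i ∈ s, i ≠ j → padicNorm p (f i) < padicNorm p (f j)) :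
    ∑ i ∈ s, f i ≠ 0 := by
  classical
  rw [← Finset.add_sum_erase s f hj]
  intro hsum
  have hrest : padicNorm p (∑ i ∈ s.erase j, f i) < padicNorm p (f j) :=
    padicNorm.sum_lt' (fun i hi => hlt i (Finset.mem_of_mem_erase hi) (Finset.ne_of_mem_erase hi))
      ((padicNorm.nonneg _).lt_of_ne' (padicNorm.nonzero hfj))
  rw [eq_neg_of_add_eq_zero_left hsum, padicNorm.neg] at hrest
  exact lt_irrefl _ hrest

theorem padicNorm_prod_pow {σ : Type*} [Fintype σ] {α : σ → ℚ} {w : σ → ℕ}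
    (hα : ∀ k, padicNorm p (α k) = (p : ℚ) ^ w k) (i : σ →₀ ℕ) :
    padicNorm p (∏ k, α k ^ i k) = (p : ℚ) ^ Finsupp.weight w i := by
  rw [Finsupp.weight_eq_sum, ← Finset.prod_pow_eq_pow_sum]
  change IsAbsoluteValue.toAbsoluteValue (padicNorm p) _ = _
  rw [map_prod]
  refine Finset.prod_congr rfl fun k _ => ?_
  rw [map_pow, IsAbsoluteValue.toAbsoluteValue_apply, hα, ← pow_mul, smul_eq_mul, mul_comm]

theorem aeval_ne_zero_of_padicNorm_weight_lt {σ : Type*} [Fintype σ] {α : σ → ℚ}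
    {w : σ → ℕ} (hα : ∀ k, padicNorm p (α k) = (p : ℚ) ^ w k)
    {P : MvPolynomial σ ℤ} {j : σ →₀ ℕ} (hj : j ∈ P.support) (hcoeff : ¬ (p : ℤ) ∣ P.coeff j)
    (hlt : ∀ i ∈ P.support, i ≠ j → Finsupp.weight w i < Finsupp.weight w j) :
    MvPolynomial.aeval α P ≠ 0 := by
  have hp : (1 : ℚ) < p := by exact_mod_cast (Fact.out : p.Prime).one_lt
  have hterm (i : σ →₀ ℕ) : padicNorm p (((P.coeff i : ℤ) : ℚ) * ∏ k, α k ^ i k)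
      = padicNorm p ((P.coeff i : ℤ) : ℚ) * (p : ℚ) ^ Finsupp.weight w i := by
    rw [padicNorm.mul, padicNorm_prod_pow hα]
  have hnorm_j :
      padicNorm p (((P.coeff j : ℤ) : ℚ) * ∏ k, α k ^ j k) = (p : ℚ) ^ Finsupp.weight w j := by
    rw [hterm, (padicNorm.int_eq_one_iff _).mpr hcoeff, one_mul]
  rw [MvPolynomial.aeval_def, MvPolynomial.eval₂_eq']
  simp only [algebraMap_int_eq, eq_intCast]
  refine sum_ne_zero_of_padicNorm_lt (p := p) hj ?_ fun i hi hij => ?_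
  · intro h
    rw [h, padicNorm.zero (p := p)] at hnorm_j
    exact (pow_pos (by positivity) _).ne hnorm_j
  · calc padicNorm p (((P.coeff i : ℤ) : ℚ) * ∏ k, α k ^ i k)
        ≤ 1 * (p : ℚ) ^ Finsupp.weight w i := by
          rw [hterm]; gcongr; exact padicNorm.of_int _
      _ < (p : ℚ) ^ Finsupp.weight w j := by
          rw [one_mul]; exact pow_lt_pow_right₀ hp (hlt i hi hij)
      _ = _ := hnorm_j.symm

end Padic

theorem Finset.sum_univ_eq_sum_Iio_add_add_sum_Ioi {ι M : Type*} [Fintype ι] [LinearOrder ι]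
    [LocallyFiniteOrderBot ι] [LocallyFiniteOrderTop ι] [AddCommMonoid M]
    (f : ι → M) (m : ι) :
    ∑ k, f k = ∑ k ∈ Finset.Iio m, f k + (f m + ∑ k ∈ Finset.Ioi m, f k) := by
  rw [← Finset.sum_filter_add_sum_filter_not Finset.univ (· < m), Finset.filter_gt_eq_Iio]
  simp only [not_lt, Finset.filter_le_eq_Ici, ← Finset.sum_Ioi_add_eq_sum_Ici, add_comm (f m)]

section SeparatedExponents

variable {d K : ℕ} {e : ℕ → ℕ}

theorem monotoneOn_Iic_of_mul_lt (hd : 0 < d)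
    (hesep : ∀ k, 1 ≤ k → k ≤ K → d * e (k - 1) < e k) : MonotoneOn e (Set.Iic K) :=
  monotoneOn_of_le_add_one Set.ordConnected_Iic fun a _ _ ha =>
    (Nat.le_mul_of_pos_left _ hd).trans (hesep (a + 1) (by omega) ha).le

theorem sum_Iio_mul_lt (hd : 0 < d)
    (hesep : ∀ k, 1 ≤ k → k ≤ K → d * e (k - 1) < e k) {i : Fin K →₀ ℕ} (hi : i.degree ≤ d)
    (m : Fin K) : ∑ k ∈ Finset.Iio m, i k * e (k + 1) < e (m + 1) :=
  calc ∑ k ∈ Finset.Iio m, i k * e (k + 1)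
      ≤ ∑ k ∈ Finset.Iio m, i k * e m := by
        refine Finset.sum_le_sum fun k hk => Nat.mul_le_mul_left _ ?_
        have hkm : k < m := Finset.mem_Iio.mp hk
        exact monotoneOn_Iic_of_mul_lt hd hesep (Set.mem_Iic.mpr (by omega))
          (Set.mem_Iic.mpr m.isLt.le) (by omega)
    _ = (∑ k ∈ Finset.Iio m, i k) * e m := (Finset.sum_mul ..).symm
    _ ≤ d * e m := by
        refine Nat.mul_le_mul_right _ (le_trans ?_ hi)
        rw [Finsupp.degree_eq_sum]
        exact Finset.sum_le_sum_of_subset (Finset.subset_univ _)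
    _ < e (m + 1) := hesep (m + 1) (by omega) m.isLt

theorem weight_lt_of_colexLt (hd : 0 < d)
    (hesep : ∀ k, 1 ≤ k → k ≤ K → d * e (k - 1) < e k) {i j : Fin K →₀ ℕ} (hi : i.degree ≤ d)
    (hij : ColexLt i j) :
    Finsupp.weight (fun k : Fin K => e (k + 1)) i
      < Finsupp.weight (fun k : Fin K => e (k + 1)) j := by
  obtain ⟨m, hm, heq⟩ := hij
  simp only [Finsupp.weight_eq_sum, smul_eq_mul]
  have hhigh : ∑ k ∈ Finset.Ioi m, i k * e (k + 1) = ∑ k ∈ Finset.Ioi m, j k * e (k + 1) :=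
    Finset.sum_congr rfl fun k hk => by rw [heq k (Finset.mem_Ioi.mp hk)]
  rw [Finset.sum_univ_eq_sum_Iio_add_add_sum_Ioi _ m,
    Finset.sum_univ_eq_sum_Iio_add_add_sum_Ioi _ m, hhigh]
  have hlow := sum_Iio_mul_lt hd hesep hi m
  have hstep : (i m + 1) * e (m + 1) ≤ j m * e (m + 1) := Nat.mul_le_mul_right _ hm
  rw [add_one_mul] at hstep
  omega

end SeparatedExponents

theorem stmt11_general (p : ℕ) (hp : p.Prime) (d K : ℕ) (hd : 0 < d)
    (e : ℕ → ℕ)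
    (hesep : ∀ k, 1 ≤ k → k ≤ K → d * e (k - 1) < e k)
    (α : Fin K → ℚ) (hα : ∀ k, α k ≠ 0)
    (hval : ∀ k : Fin K, padicValRat p (α k) = -(e (k.val + 1) : ℤ))
    (P : MvPolynomial (Fin K) ℤ) (hP : P ≠ 0) (hdeg : P.totalDegree ≤ d)
    (hlead : ∀ j₀ ∈ P.support,
      (∀ i ∈ P.support, i ≠ j₀ → ColexLt i j₀) → ¬ ((p : ℤ) ∣ P.coeff j₀)) :
    MvPolynomial.aeval α P ≠ 0 := by
  have : Fact p.Prime := ⟨hp⟩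
  obtain ⟨j₀, hj₀, hmax⟩ :=
    P.support.exists_max_image (fun i => toColex ⇑i) (MvPolynomial.support_nonempty.mpr hP)
  have hcolex : ∀ i ∈ P.support, i ≠ j₀ → ColexLt i j₀ := fun i hi hne =>
    colexLt_iff_toColex_lt.mpr ((hmax i hi).lt_of_ne fun h => hne (DFunLike.coe_injective h))
  have hnorm (k : Fin K) : padicNorm p (α k) = (p : ℚ) ^ e (k + 1) := by
    rw [padicNorm.eq_zpow_of_nonzero (hα k), hval k, neg_neg, zpow_natCast]
  refine aeval_ne_zero_of_padicNorm_weight_lt hnorm hj₀ (hlead j₀ hj₀ hcolex) fun i hi hne => ?_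
  exact weight_lt_of_colexLt hd hesep ((MvPolynomial.le_totalDegree hi).trans hdeg)
    (hcolex i hi hne)

theorem stmt11 (p : ℕ) (hp : p.Prime) (d K : ℕ) (hd : 0 < d) (hK : 0 < K)
    (e : ℕ → ℕ) (he0 : e 0 = 0)
    (hepos : ∀ k, 1 ≤ k → k ≤ K → 0 < e k)
    (hesep : ∀ k, 1 ≤ k → k ≤ K → d * e (k - 1) < e k)
    (α : Fin K → ℚ) (hα : ∀ k, α k ≠ 0)
    (hval : ∀ k : Fin K, padicValRat p (α k) = -(e (k.val + 1) : ℤ))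
    (P : MvPolynomial (Fin K) ℤ) (hP : P ≠ 0) (hdeg : P.totalDegree ≤ d)
    (hlead : ∀ j₀ ∈ P.support,
      (∀ i ∈ P.support, i ≠ j₀ → ColexLt i j₀) → ¬ ((p : ℤ) ∣ P.coeff j₀)) :
    MvPolynomial.aeval α P ≠ 0 :=
  stmt11_general p hp d K hd e hesep α hα hval P hP hdeg hlead
end

section
/- Let {a_n} be a non-decreasing sequence of positive odd integers with limsup_{n→∞} a_n^{1/2^n} = ∞, and let {r_n} be a sequence of pairwise distinct non-negative integers. Then for every sequence {c_n} of odd integers, the series Σ_{n=1}^∞ 1/(2^{r_n} · a_n · c_n) converges to an irrational number. -/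
/-!
Write `d j = 2 ^ ρ j * u j` with `u j` odd and the `ρ j` distinct, and suppose that
`∑ 1 / d j = p / (2 ^ s * q)` with `q` odd. Let `F` be a finite set of indices containing one
with `ρ j > s`, and `R = max_F ρ`. Multiplying `p / (2 ^ s * q) - ∑_{j ∈ F} 1 / d j` by
`q * 2 ^ R * ∏_{j ∈ F} u j` gives an odd integer (only the index where `ρ` is maximal contributes
an odd term), so the tail `∑_{j ∉ F} 1 / |d j|` is at least `1 / (2 ^ s * q * ∏_{j ∈ F} |d j|)`.

List the values `|d j|` increasingly as `N 0 < N 1 < ⋯`; then `2 ^ k ≤ N k` and `a k ≤ N k`.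
Taking for `F` the indices of `N 0, …, N k`, the tail is at most `m / N (k + 1) + 2 ^ (-m)` for
every `m`, which forces `N (k + 1) ≤ 2 (log₂ G k + 1) G k` with `G k ≈ ∏_{i ≤ k} N i`. Hence
`log₂ G k = O(2 ^ k)`, so `a k ≤ N k ≤ C ^ 2 ^ k` for some `C`, contradicting
`limsup a k ^ (1 / 2 ^ k) = ∞`.
-/

open Filter Finset Function

lemma Finset.odd_prod {ι R : Type*} [CommSemiring R] (s : Finset ι) {f : ι → R}
    (hf : ∀ i ∈ s, Odd (f i)) : Odd (∏ i ∈ s, f i) :=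
  prod_induction f Odd (fun _ _ => Odd.mul) odd_one hf

lemma Int.ne_zero_of_odd {z : ℤ} (hz : Odd z) : z ≠ 0 := by
  rintro rfl
  simp at hz

lemma padicValNat_two_pow_mul_odd {a m : ℕ} (hm : Odd m) : padicValNat 2 (2 ^ a * m) = a := by
  rw [padicValNat.mul (by positivity) hm.pos.ne', padicValNat.prime_pow,
    padicValNat.eq_zero_of_not_dvd hm.not_two_dvd_nat, add_zero]

lemma injective_two_pow_mul_natAbs {ι : Type*} {u : ι → ℤ} (hu : ∀ j, Odd (u j)) {ρ : ι → ℕ}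
    (hρ : Injective ρ) : Injective fun j => 2 ^ ρ j * (u j).natAbs := fun i j hij => hρ <| by
  simpa [padicValNat_two_pow_mul_odd (Int.natAbs_odd.2 (hu _))] using
    congrArg (padicValNat 2) hij

lemma Nat.size_mul_le (a b : ℕ) : (a * b).size ≤ a.size + b.size :=
  Nat.size_le.2 <| by
    rw [pow_add]
    exact Nat.mul_lt_mul_of_lt_of_lt a.lt_size_self b.lt_size_self

lemma summable_inv_of_two_pow_le {ι : Type*} {D ρ : ι → ℕ} (hρ : Injective ρ)
    (hD : ∀ j, 2 ^ ρ j ≤ D j) : Summable fun j => (D j : ℝ)⁻¹ :=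
  (summable_geometric_two.comp_injective hρ).of_nonneg_of_le (fun _ => by positivity) fun j => by
    rw [comp_apply, one_div, inv_pow]
    exact inv_anti₀ (by positivity) (by exact_mod_cast hD j)

lemma exists_le_apply_of_injective {g : ℕ → ℕ} (hg : Injective g) (k : ℕ) :
    ∃ i ≤ k, k ≤ g i := by
  by_contra! h
  have := card_le_card_of_injOn g (s := range (k + 1)) (t := range k)
    (fun i hi => by simpa using h i (by simpa [Nat.lt_succ_iff] using hi)) hg.injOn
  simp at this

section TwoAdic

variable {ι : Type*} [DecidableEq ι] {u : ι → ℤ} {ρ : ι → ℕ} {F : Finset ι}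

lemma odd_sum_two_pow_sub_mul_prod_erase (hu : ∀ j ∈ F, Odd (u j)) (hρ : Set.InjOn ρ F)
    {m : ι} (hm : m ∈ F) (hmax : ∀ j ∈ F, ρ j ≤ ρ m) :
    Odd (∑ j ∈ F, 2 ^ (ρ m - ρ j) * ∏ i ∈ F.erase j, u i) := by
  rw [← add_sum_erase F _ hm, Nat.sub_self, pow_zero, one_mul]
  refine (odd_prod _ fun i hi => hu i (mem_of_mem_erase hi)).add_even
    (even_sum _ fun j hj => ?_)
  have hjF := mem_of_mem_erase hj
  have hlt : ρ j < ρ m := (hmax j hjF).lt_of_ne fun h => ne_of_mem_erase hj (hρ hjF hm h)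
  exact (even_two.pow_of_ne_zero (by omega)).mul_right _

lemma two_pow_mul_prod_mul_sum_one_div (hu : ∀ j ∈ F, u j ≠ 0) {R : ℕ}
    (hR : ∀ j ∈ F, ρ j ≤ R) :
    (2 ^ R * ∏ i ∈ F, (u i : ℝ)) * ∑ j ∈ F, 1 / (2 ^ ρ j * (u j : ℝ)) =
      ((∑ j ∈ F, 2 ^ (R - ρ j) * ∏ i ∈ F.erase j, u i : ℤ) : ℝ) := by
  push_cast
  rw [mul_sum]
  refine sum_congr rfl fun j hj => ?_
  have : (u j : ℝ) ≠ 0 := by exact_mod_cast hu j hj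
  rw [← mul_prod_erase F _ hj, ← pow_sub_mul_pow 2 (hR j hj)]
  field_simp

lemma exists_odd_eq_mul_sub_sum (hu : ∀ j ∈ F, Odd (u j)) (hρ : Set.InjOn ρ F)
    {m : ι} (hm : m ∈ F) (hmax : ∀ j ∈ F, ρ j ≤ ρ m) {s q : ℕ} (hq : Odd q) (hs : s < ρ m)
    (p : ℤ) : ∃ z : ℤ, Odd z ∧
      (q * 2 ^ ρ m * ∏ i ∈ F, (u i : ℝ)) *
        (p / (2 ^ s * q) - ∑ j ∈ F, 1 / (2 ^ ρ j * (u j : ℝ))) = z := by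
  set A := ∑ j ∈ F, 2 ^ (ρ m - ρ j) * ∏ i ∈ F.erase j, u i
  refine ⟨2 ^ (ρ m - s) * p * ∏ i ∈ F, u i - q * A, ?_, ?_⟩
  · exact ((even_two.pow_of_ne_zero (by omega)).mul_right _ |>.mul_right _).sub_odd
      ((Int.odd_coe_nat q).2 hq |>.mul (odd_sum_two_pow_sub_mul_prod_erase hu hρ hm hmax))
  · have hA := two_pow_mul_prod_mul_sum_one_div (fun j hj => Int.ne_zero_of_odd (hu j hj)) hmax
    have hq0 : (q : ℝ) ≠ 0 := by exact_mod_cast hq.pos.ne'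
    have hx : (q * 2 ^ ρ m * ∏ i ∈ F, (u i : ℝ)) * (p / (2 ^ s * q)) =
        2 ^ (ρ m - s) * p * ∏ i ∈ F, (u i : ℝ) := by
      rw [← pow_sub_mul_pow 2 hs.le]
      field_simp
    have hS : (q * 2 ^ ρ m * ∏ i ∈ F, (u i : ℝ)) * ∑ j ∈ F, 1 / (2 ^ ρ j * (u j : ℝ)) =
        q * A := by
      rw [← hA]
      ring
    rw [mul_sub, hx, hS]
    push_cast
    ring

lemma one_le_mul_prod_mul_abs_sub_sum (hu : ∀ j ∈ F, Odd (u j)) (hρ : Set.InjOn ρ F)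
    {m : ι} (hm : m ∈ F) {s q : ℕ} (hq : Odd q) (hs : s < ρ m) (p : ℤ) :
    1 ≤ (2 ^ s * q : ℝ) * (∏ j ∈ F, 2 ^ ρ j * |(u j : ℝ)|) *
      |p / (2 ^ s * q) - ∑ j ∈ F, 1 / (2 ^ ρ j * (u j : ℝ))| := by
  obtain ⟨n, hnF, hn⟩ := exists_mem_eq_sup F ⟨m, hm⟩ ρ
  have hmax : ∀ j ∈ F, ρ j ≤ ρ n := fun j hj => hn ▸ le_sup hj
  obtain ⟨z, hz, hL⟩ :=
    exists_odd_eq_mul_sub_sum hu hρ hnF hmax hq (hs.trans_le (hmax m hm)) p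
  have hL_le : |(q * 2 ^ ρ n * ∏ i ∈ F, (u i : ℝ))| ≤
      (2 ^ s * q : ℝ) * ∏ j ∈ F, 2 ^ ρ j * |(u j : ℝ)| := by
    rw [abs_mul, abs_mul, abs_prod, prod_mul_distrib, prod_pow_eq_pow_sum,
      abs_of_nonneg (by positivity), abs_of_nonneg (by positivity)]
    calc (q : ℝ) * 2 ^ ρ n * ∏ i ∈ F, |(u i : ℝ)|
        ≤ q * 2 ^ (∑ j ∈ F, ρ j) * ∏ i ∈ F, |(u i : ℝ)| := by
          gcongr
          · exact one_le_two
          · exact single_le_sum (fun _ _ => Nat.zero_le _) hnF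
      _ ≤ 2 ^ s * (q * 2 ^ (∑ j ∈ F, ρ j) * ∏ i ∈ F, |(u i : ℝ)|) :=
          le_mul_of_one_le_left (by positivity) (one_le_pow₀ one_le_two)
      _ = _ := by ring
  calc (1 : ℝ) ≤ |(z : ℝ)| := by exact_mod_cast Int.one_le_abs (Int.ne_zero_of_odd hz)
    _ = |(q * 2 ^ ρ n * ∏ i ∈ F, (u i : ℝ))| *
        |p / (2 ^ s * q) - ∑ j ∈ F, 1 / (2 ^ ρ j * (u j : ℝ))| := by rw [← hL, abs_mul]
    _ ≤ _ := mul_le_mul_of_nonneg_right hL_le (abs_nonneg _)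

lemma one_le_den_mul_prod_mul_tsum_compl (hu : ∀ j ∈ F, Odd (u j)) (hρ : Set.InjOn ρ F)
    (hsum : Summable fun j => |1 / (2 ^ ρ j * (u j : ℝ))|) {x : ℚ}
    (hx : ∑' j, 1 / (2 ^ ρ j * (u j : ℝ)) = x) {m : ι} (hmF : m ∈ F) {s q : ℕ} (hq : Odd q)
    (hden : x.den = 2 ^ s * q) (hm : s < ρ m) :
    1 ≤ (x.den : ℝ) * (∏ j ∈ F, 2 ^ ρ j * |(u j : ℝ)|) *
      ∑' j : ↥(F : Set ι)ᶜ, |1 / (2 ^ ρ j * (u j : ℝ))| := by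
  have htail := (Summable.of_abs hsum).sum_add_tsum_compl (s := F)
  have hx' : (x : ℝ) = x.num / (2 ^ s * q) := by rw [Rat.cast_def, hden]; push_cast; rfl
  calc 1 ≤ (2 ^ s * q : ℝ) * (∏ j ∈ F, 2 ^ ρ j * |(u j : ℝ)|) *
        |x.num / (2 ^ s * q) - ∑ j ∈ F, 1 / (2 ^ ρ j * (u j : ℝ))| :=
        one_le_mul_prod_mul_abs_sub_sum hu hρ hmF hq hm x.num
    _ = (x.den : ℝ) * (∏ j ∈ F, 2 ^ ρ j * |(u j : ℝ)|) *
        |∑' j : ↥(F : Set ι)ᶜ, 1 / (2 ^ ρ j * (u j : ℝ))| := by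
      rw [← hx', ← hx, ← htail, add_sub_cancel_left, hden]
      push_cast
      rfl
    _ ≤ _ := by
      have hsub : Summable fun j : ↥(F : Set ι)ᶜ => ‖1 / (2 ^ ρ j * (u j : ℝ))‖ :=
        hsum.subtype _
      have := norm_tsum_le_tsum_norm hsub
      simp only [Real.norm_eq_abs] at this
      exact mul_le_mul_of_nonneg_left this (by positivity)

end TwoAdic

noncomputable def sortedRange (D : ℕ → ℕ) : ℕ → ℕ := Nat.nth (· ∈ Set.range D)

section SortedRange

variable {D : ℕ → ℕ} (hD : Injective D)
include hD

lemma sortedRange_strictMono : StrictMono (sortedRange D) :=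
  Nat.nth_strictMono (Set.infinite_range_of_injective hD)

lemma exists_injective_comp_eq_sortedRange :
    ∃ idx : ℕ → ℕ, Injective idx ∧ ∀ i, D (idx i) = sortedRange D i := by
  choose idx hidx using Nat.nth_mem_of_infinite (Set.infinite_range_of_injective hD)
  replace hidx : ∀ i, D (idx i) = sortedRange D i := hidx
  exact ⟨idx, fun i j hij => (sortedRange_strictMono hD).injective <| by
    rw [← hidx, ← hidx, hij], hidx⟩

lemma le_sortedRange {h : ℕ → ℕ} (hh : Monotone h) {σ : ℕ → ℕ} (hσ : Injective σ)
    (hle : ∀ j, h (σ j) ≤ D j) (k : ℕ) : h k ≤ sortedRange D k := by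
  obtain ⟨idx, hidx_inj, hidx⟩ := exists_injective_comp_eq_sortedRange hD
  obtain ⟨i, hik, hki⟩ := exists_le_apply_of_injective (hσ.comp hidx_inj) k
  calc h k ≤ h (σ (idx i)) := hh hki
    _ ≤ D (idx i) := hle _
    _ = sortedRange D i := hidx i
    _ ≤ sortedRange D k := (sortedRange_strictMono hD).monotone hik

lemma summable_inv_sortedRange (hsum : Summable fun j => (D j : ℝ)⁻¹) :
    Summable fun i => (sortedRange D i : ℝ)⁻¹ := by
  obtain ⟨idx, hidx_inj, hidx⟩ := exists_injective_comp_eq_sortedRange hD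
  simpa [comp_def, hidx] using hsum.comp_injective hidx_inj

lemma tsum_compl_inv_le_tsum_inv_sortedRange (hsum : Summable fun j => (D j : ℝ)⁻¹)
    {F : Finset ℕ} {k : ℕ} (hF : ∀ j ∉ F, sortedRange D k < D j) :
    ∑' j : ↥(F : Set ℕ)ᶜ, (D j : ℝ)⁻¹ ≤ ∑' i, (sortedRange D (i + (k + 1)) : ℝ)⁻¹ := by
  classical
  have hcount (j : ℕ) : sortedRange D (Nat.count (· ∈ Set.range D) (D j)) = D j :=
    Nat.nth_count ⟨j, rfl⟩
  have hrank (j : ↥(F : Set ℕ)ᶜ) : k + 1 ≤ Nat.count (· ∈ Set.range D) (D j) := by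
    by_contra! hlt
    have := (sortedRange_strictMono hD).monotone (Nat.lt_succ_iff.1 hlt)
    rw [hcount] at this
    exact (hF j j.2).not_ge this
  set e : ↥(F : Set ℕ)ᶜ → ℕ := fun j => Nat.count (· ∈ Set.range D) (D j) - (k + 1)
  have he (j : ↥(F : Set ℕ)ᶜ) : sortedRange D (e j + (k + 1)) = D j := by
    simp only [e, Nat.sub_add_cancel (hrank j), hcount]
  have he_inj : Injective e := fun i j hij => Subtype.ext (hD (by rw [← he i, ← he j, hij]))
  calc ∑' j : ↥(F : Set ℕ)ᶜ, (D j : ℝ)⁻¹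
      = ∑' j : ↥(F : Set ℕ)ᶜ, (sortedRange D (e j + (k + 1)) : ℝ)⁻¹ := by simp only [he]
    _ ≤ _ := tsum_comp_le_tsum_of_inj
        ((summable_nat_add_iff (k + 1)).2 (summable_inv_sortedRange hD hsum))
        (fun _ => by positivity) he_inj

lemma one_le_mul_prod_sortedRange_mul_tsum (hsum : Summable fun j => (D j : ℝ)⁻¹) {C m : ℕ}
    (hm : 0 < D m)
    (h : ∀ F : Finset ℕ, m ∈ F →
      1 ≤ (C : ℝ) * (∏ j ∈ F, (D j : ℝ)) * ∑' j : ↥(F : Set ℕ)ᶜ, (D j : ℝ)⁻¹) (k : ℕ) :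
    1 ≤ ((C * D m * ∏ i ∈ range (k + 1), sortedRange D i : ℕ) : ℝ) *
      ∑' i, (sortedRange D (i + (k + 1)) : ℝ)⁻¹ := by
  obtain ⟨idx, hidx_inj, hidx⟩ := exists_injective_comp_eq_sortedRange hD
  set F := insert m ((range (k + 1)).image idx)
  have hprod : ∏ j ∈ F, D j ≤ D m * ∏ i ∈ range (k + 1), sortedRange D i := by
    simp only [← hidx, ← prod_image hidx_inj.injOn, F]
    by_cases hmF : m ∈ (range (k + 1)).image idx
    · rw [insert_eq_of_mem hmF]
      exact Nat.le_mul_of_pos_left _ hm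
    · rw [prod_insert hmF]
  have hcompl (j : ℕ) (hj : j ∉ F) : sortedRange D k < D j := by
    classical
    by_contra! hle
    set c := Nat.count (· ∈ Set.range D) (D j)
    have hc : D j = sortedRange D c := (Nat.nth_count ⟨j, rfl⟩).symm
    have hck : c < k + 1 := Nat.lt_succ_of_le <| (sortedRange_strictMono hD).le_iff_le.1 (hc ▸ hle)
    exact hj (mem_insert_of_mem (mem_image.2 ⟨c, mem_range.2 hck, hD (by rw [hidx, hc])⟩))
  have hC : (C : ℝ) * ∏ j ∈ F, (D j : ℝ) ≤
      ((C * D m * ∏ i ∈ range (k + 1), sortedRange D i : ℕ) : ℝ) := by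
    rw [mul_assoc]
    exact_mod_cast Nat.mul_le_mul_left C hprod
  calc 1 ≤ (C : ℝ) * (∏ j ∈ F, (D j : ℝ)) * ∑' j : ↥(F : Set ℕ)ᶜ, (D j : ℝ)⁻¹ :=
        h F (mem_insert_self _ _)
    _ ≤ _ := mul_le_mul hC (tsum_compl_inv_le_tsum_inv_sortedRange hD hsum hcompl)
        (tsum_nonneg fun _ => by positivity) (by positivity)

end SortedRange

lemma exists_size_le_mul_two_pow {G : ℕ → ℕ}
    (hG : ∀ k, G (k + 1) ≤ 2 * ((G k).size + 1) * G k ^ 2) :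
    ∃ M, ∀ k, 1 ≤ k → (G k).size ≤ M * 2 ^ k := by
  have hsize (k : ℕ) : (G (k + 1)).size ≤ 2 * (G k).size + ((G k).size + 1).size + 2 := by
    have h1 := Nat.size_mul_le (2 * ((G k).size + 1)) (G k * G k)
    have h2 := Nat.size_mul_le 2 ((G k).size + 1)
    have h3 := Nat.size_mul_le (G k) (G k)
    have h4 : Nat.size 2 = 2 := by decide
    have := Nat.size_le_size (sq (G k) ▸ hG k)
    omega
  set M := (G 1).size + 4
  have hM : M.size ≤ M := Nat.size_le.2 M.lt_two_pow_self
  -- the slack `k + M.size + 3` absorbs the logarithmic term of `hsize`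
  have key (k : ℕ) (hk : 1 ≤ k) : (G k).size + k + M.size + 3 ≤ M * 2 ^ k := by
    induction k, hk using Nat.le_induction with
    | base => omega
    | succ k _ ih =>
      have hlog : ((G k).size + 1).size ≤ M.size + k := by
        rw [← Nat.size_shiftLeft (by omega : M ≠ 0), Nat.shiftLeft_eq]
        exact Nat.size_le_size (by omega)
      have := hsize k
      rw [pow_succ, ← mul_assoc]
      omega
  exact ⟨M, fun k hk => by have := key k hk; omega⟩

section Growth

variable {N : ℕ → ℕ} (hN : Monotone N) (h2 : ∀ i, 2 ^ i ≤ N i)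
include hN h2

lemma tsum_inv_add_le (k m : ℕ) :
    ∑' i, (N (i + (k + 1)) : ℝ)⁻¹ ≤ m / N (k + 1) + (2 ^ m)⁻¹ := by
  have hpos (i : ℕ) : (0 : ℝ) < N i := by exact_mod_cast Nat.one_le_two_pow.trans (h2 i)
  have hf (j : ℕ) : (N (j + (k + 1)) : ℝ)⁻¹ ≤ (2 ^ (j + 1))⁻¹ := by
    rw [inv_le_inv₀ (hpos _) (by positivity)]
    exact_mod_cast (Nat.pow_le_pow_right two_pos (by omega)).trans (h2 _)
  have hgeom (a : ℝ) (j : ℕ) : a / 2 / 2 ^ j = a * (2 ^ (j + 1))⁻¹ := by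
    rw [pow_succ]
    ring
  have hs : Summable fun i => (N (i + (k + 1)) : ℝ)⁻¹ :=
    (summable_geometric_two' 1).of_nonneg_of_le (fun _ => by positivity)
      fun i => (hf i).trans_eq (by rw [hgeom, one_mul])
  rw [← hs.sum_add_tsum_nat_add m]
  gcongr ?_ + ?_
  · calc ∑ i ∈ range m, (N (i + (k + 1)) : ℝ)⁻¹ ≤ ∑ i ∈ range m, (N (k + 1) : ℝ)⁻¹ :=
          sum_le_sum fun i _ => inv_anti₀ (hpos _) (by exact_mod_cast hN (by omega))
      _ = m / N (k + 1) := by simp [div_eq_mul_inv]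
  · calc ∑' i, (N (i + m + (k + 1)) : ℝ)⁻¹ ≤ ∑' i, (2 ^ m)⁻¹ / 2 / 2 ^ i :=
          (hs.comp_injective (add_left_injective m)).tsum_le_tsum
            (fun i => (hf (i + m)).trans_eq (by rw [hgeom, ← mul_inv, ← pow_add]; ring_nf))
            (summable_geometric_two' _)
      _ = (2 ^ m)⁻¹ := tsum_geometric_two' _

lemma lt_two_mul_size_add_one_mul {k G : ℕ}
    (hG : 1 ≤ (G : ℝ) * ∑' i, (N (i + (k + 1)) : ℝ)⁻¹) :
    N (k + 1) < 2 * (G.size + 1) * G := by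
  have hN0 : (0 : ℝ) < N (k + 1) := by exact_mod_cast Nat.one_le_two_pow.trans (h2 _)
  have hG2 : (G : ℝ) * (2 ^ (G.size + 1))⁻¹ < 1 / 2 := by
    have hG1 : (G : ℝ) / 2 ^ G.size < 1 :=
      (div_lt_one (by positivity)).2 (by exact_mod_cast G.lt_size_self)
    rw [pow_succ, mul_inv, ← mul_assoc, ← div_eq_mul_inv, ← div_eq_mul_inv]
    linarith
  have htail := mul_le_mul_of_nonneg_left (tsum_inv_add_le hN h2 k (G.size + 1)) G.cast_nonneg
  have hhalf : 1 / 2 < (G : ℝ) * (G.size + 1 : ℕ) / N (k + 1) := by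
    rw [mul_add] at htail
    linarith [mul_div_assoc' (G : ℝ) (G.size + 1 : ℕ) (N (k + 1))]
  rw [lt_div_iff₀ hN0] at hhalf
  have hlt : (N (k + 1) : ℝ) < 2 * (G.size + 1 : ℕ) * G := by linarith
  exact_mod_cast hlt

lemma exists_lt_two_pow_mul_two_pow {C : ℕ} (hC : 1 ≤ C)
    (h : ∀ k, 1 ≤ ((C * ∏ i ∈ range (k + 1), N i : ℕ) : ℝ) * ∑' i, (N (i + (k + 1)) : ℝ)⁻¹) :
    ∃ M, ∀ k, 1 ≤ k → N k < 2 ^ (M * 2 ^ k) := by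
  set G : ℕ → ℕ := fun k => C * ∏ i ∈ range (k + 1), N i
  have hG (k : ℕ) : G (k + 1) ≤ 2 * ((G k).size + 1) * G k ^ 2 := by
    have := lt_two_mul_size_add_one_mul hN h2 (h k)
    calc G (k + 1) = G k * N (k + 1) := by simp only [G, prod_range_succ, mul_assoc]
      _ ≤ G k * (2 * ((G k).size + 1) * G k) := by gcongr
      _ = _ := by ring
  obtain ⟨M, hM⟩ := exists_size_le_mul_two_pow hG
  refine ⟨M, fun k hk => ?_⟩
  calc N k ≤ G k := by
        rw [← one_mul (N k)]
        exact Nat.mul_le_mul hC (single_le_prod' (fun i _ => Nat.one_le_two_pow.trans (h2 i))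
          (self_mem_range_succ k))
    _ < 2 ^ (G k).size := (G k).lt_size_self
    _ ≤ 2 ^ (M * 2 ^ k) := Nat.pow_le_pow_right two_pos (hM k hk)

end Growth

theorem irrational_tsum_one_div_two_pow_mul {u : ℕ → ℤ} (hu : ∀ j, Odd (u j)) {ρ : ℕ → ℕ}
    (hρ : Injective ρ) {α : ℕ → ℕ} (hα : Monotone α) (hαu : ∀ j, α j ≤ (u j).natAbs)
    (hbig : ∀ C : ℕ, ∃ᶠ k in atTop, C ^ 2 ^ k < α k) :
    Irrational (∑' j, 1 / (2 ^ ρ j * (u j : ℝ))) := by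
  rintro ⟨x, hx⟩
  set d : ℕ → ℕ := fun j => 2 ^ ρ j * (u j).natAbs
  have hu_pos (j : ℕ) : 0 < (u j).natAbs := Int.natAbs_pos.2 (Int.ne_zero_of_odd (hu j))
  have hd_two_pow (j : ℕ) : 2 ^ ρ j ≤ d j := Nat.le_mul_of_pos_right _ (hu_pos j)
  have hd_abs (j : ℕ) : |1 / (2 ^ ρ j * (u j : ℝ))| = (d j : ℝ)⁻¹ := by
    simp [d, abs_mul, Nat.cast_natAbs]
  have hd_inj : Injective d := injective_two_pow_mul_natAbs hu hρ
  have hsum := summable_inv_of_two_pow_le hρ hd_two_pow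
  obtain ⟨s, q, hq, hden⟩ := Nat.exists_eq_two_pow_mul_odd x.den_nz
  obtain ⟨m, -, hm⟩ := exists_le_apply_of_injective hρ (s + 1)
  have hF (F : Finset ℕ) (hmF : m ∈ F) :
      1 ≤ (x.den : ℝ) * (∏ j ∈ F, (d j : ℝ)) * ∑' j : ↥(F : Set ℕ)ᶜ, (d j : ℝ)⁻¹ := by
    have := one_le_den_mul_prod_mul_tsum_compl (fun j _ => hu j) hρ.injOn
      (by simpa only [hd_abs] using hsum) hx.symm hmF hq hden hm
    simpa [hd_abs, d, Nat.cast_natAbs] using this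
  have hd_pos (j : ℕ) : 0 < d j := Nat.two_pow_pos _ |>.trans_le (hd_two_pow j)
  obtain ⟨M, hM⟩ := exists_lt_two_pow_mul_two_pow (sortedRange_strictMono hd_inj).monotone
    (le_sortedRange hd_inj (pow_right_mono₀ one_le_two) hρ hd_two_pow)
    (Nat.mul_pos x.den_pos (hd_pos m))
    (one_le_mul_prod_sortedRange_mul_tsum hd_inj hsum (hd_pos m) hF)
  obtain ⟨k, hk_big, hk⟩ := ((hbig (2 ^ M)).and_eventually (eventually_ge_atTop 1)).exists
  have hα_le := le_sortedRange hd_inj hα injective_id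
    (fun j => (hαu j).trans (Nat.le_mul_of_pos_left _ (Nat.two_pow_pos _))) k
  have := hM k hk
  rw [← pow_mul] at hk_big
  omega

lemma frequently_pow_two_pow_lt {a : ℕ → ℕ}
    (h : ∀ C : ℝ, ∃ᶠ n : ℕ in atTop, C < (a n : ℝ) ^ (((2 : ℝ) ^ n)⁻¹)) (C : ℕ) :
    ∃ᶠ n in atTop, C ^ 2 ^ n < a n :=
  (h C).mono fun n hn => by
    rw [Real.lt_rpow_inv_iff_of_pos (by positivity) (by positivity) (by positivity),
      ← Nat.cast_ofNat, ← Nat.cast_pow, Real.rpow_natCast] at hn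
    exact_mod_cast hn

theorem stmt13_general (a : ℕ → ℕ) (hmono : Monotone a)
    (hodd : ∀ n, 1 ≤ n → Odd (a n))
    (hlimsup : ∀ C : ℝ, ∃ᶠ n : ℕ in atTop, C < (a n : ℝ) ^ (((2 : ℝ) ^ n)⁻¹))
    (r : ℕ → ℕ) (hr : Function.Injective r)
    (c : ℕ → ℤ) (hc : ∀ n, Odd (c n)) :
    Irrational (∑' n : ℕ,
      1 / ((2 : ℝ) ^ r (n + 1) * (a (n + 1) : ℝ) * (c (n + 1) : ℝ))) := by
  have hbig (C : ℕ) : ∃ᶠ k in atTop, C ^ 2 ^ k < a (k + 1) := by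
    have := frequently_pow_two_pow_lt hlimsup C
    rw [← map_add_atTop_eq_nat 1, frequently_map] at this
    exact this.mono fun k hk => (Nat.pow_le_pow_left (Nat.le_self_pow two_ne_zero C) _).trans_lt
      (by rwa [← pow_mul, ← pow_succ'])
  have := irrational_tsum_one_div_two_pow_mul (u := fun n => a (n + 1) * c (n + 1))
    (fun n => ((Int.odd_coe_nat _).2 (hodd (n + 1) n.succ_pos)).mul (hc _))
    (hr.comp (add_left_injective 1)) (fun i j hij => hmono (by omega))
    (fun n => by
      rw [Int.natAbs_mul, Int.natAbs_natCast]
      exact Nat.le_mul_of_pos_right _ (Int.natAbs_pos.2 (Int.ne_zero_of_odd (hc _))))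
    hbig
  simpa only [Int.cast_mul, Int.cast_natCast, comp_apply, mul_assoc] using this

theorem stmt13 (a : ℕ → ℕ) (hmono : Monotone a)
    (hodd : ∀ n, 1 ≤ n → Odd (a n)) (hpos : ∀ n, 1 ≤ n → 0 < a n)
    (hlimsup : ∀ C : ℝ, ∃ᶠ n : ℕ in atTop, C < (a n : ℝ) ^ (((2 : ℝ) ^ n)⁻¹))
    (r : ℕ → ℕ) (hr : Function.Injective r)
    (c : ℕ → ℤ) (hc : ∀ n, Odd (c n)) :
    Irrational (∑' n : ℕ,
      1 / ((2 : ℝ) ^ r (n + 1) * (a (n + 1) : ℝ) * (c (n + 1) : ℝ))) :=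
  stmt13_general a hmono hodd hlimsup r hr c hc
end

section
/- Let f : ℕ → ℤ be a function which takes even values infinitely often and odd values infinitely often, and let k ≥ 2 be an integer. Then there exists a function g : ℕ → ℕ with positive values such that Σ_{n=1}^∞ (−1)^{f(n)} / (g(n) · n^k) = 0. -/
/-!
Pair every index `n` with an index `σ n` of the opposite parity of `f` by an involution `σ` of `ℕ`
(the `i`-th index with `f` even is matched with the `i`-th index with `f` odd), and choose
`g n = (σ n)^k`. The terms at `n` and `σ n` then have the same absolute value `1 / (n σ n)^k` and
opposite signs, so reindexing the absolutely convergent series by `σ` negates its sum.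
-/

open Filter

theorem hasSum_zero_of_comp_perm_eq_neg {ι E : Type*} [AddCommGroup E] [IsAddTorsionFree E]
    [TopologicalSpace E] [IsTopologicalAddGroup E] [T2Space E] {F : ι → E} (hF : Summable F)
    (σ : Equiv.Perm ι) (hσ : ∀ n, F (σ n) = -F n) : HasSum F 0 := by
  have h : ∑' n, F n = -∑' n, F n := by
    rw [← tsum_neg, ← σ.tsum_eq F]
    simp only [hσ]
  rw [self_eq_neg] at h
  exact h ▸ hF.hasSum

namespace Nat

variable (P : ℕ → Prop) [DecidablePred P]

/-- Sends the `i`-th element of `P` to the `i`-th element of its complement, and back. -/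
noncomputable def rankSwap (n : ℕ) : ℕ :=
  if P n then nth (¬P ·) (count P n) else nth P (count (¬P ·) n)

variable {P}
variable (hP : ∃ᶠ n in atTop, P n) (hP' : ∃ᶠ n in atTop, ¬P n)
include hP hP'

theorem rankSwap_spec (n : ℕ) : P (rankSwap P n) ↔ ¬P n := by
  rw [frequently_atTop_iff_infinite] at hP hP'
  by_cases hn : P n
  · simpa [rankSwap, hn] using nth_mem_of_infinite hP' (count P n)
  · simpa [rankSwap, hn] using nth_mem_of_infinite hP (count (¬P ·) n)

theorem rankSwap_involutive : Function.Involutive (rankSwap P) := by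
  intro n
  have hswap := rankSwap_spec hP hP' n
  rw [frequently_atTop_iff_infinite] at hP hP'
  by_cases hn : P n
  · have hm : ¬P (rankSwap P n) := by tauto
    rw [rankSwap, if_neg hm, rankSwap, if_pos hn, count_nth_of_infinite hP', nth_count hn]
  · have hm : P (rankSwap P n) := by tauto
    rw [rankSwap, if_pos hm, rankSwap, if_neg hn, count_nth_of_infinite hP, nth_count hn]

end Nat

theorem neg_one_zpow_eq_neg_of_even_iff_not_even {a b : ℤ} (h : Even a ↔ ¬Even b) :
    (-1 : ℝ) ^ a = -(-1 : ℝ) ^ b := by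
  by_cases hb : Even b
  · rw [hb.neg_one_zpow, (Int.not_even_iff_odd.mp (by tauto)).neg_one_zpow]
  · rw [(h.mpr hb).neg_one_zpow, (Int.not_even_iff_odd.mp hb).neg_one_zpow, neg_neg]

theorem summable_div_mul_succ_pow {s : ℕ → ℝ} (hs : ∀ n, |s n| ≤ 1) (σ : ℕ → ℕ) {k : ℕ}
    (hk : 1 < k) : Summable fun n : ℕ => s n / (((σ n : ℝ) + 1) ^ k * ((n : ℝ) + 1) ^ k) := by
  have hbound : Summable fun n : ℕ => 1 / ((n + 1 : ℕ) : ℝ) ^ k :=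
    (summable_nat_add_iff 1).mpr (Real.summable_one_div_nat_pow.mpr hk)
  refine hbound.of_norm_bounded fun n => ?_
  have hσ : (1 : ℝ) ≤ ((σ n : ℝ) + 1) ^ k := one_le_pow₀ (by linarith [(σ n).cast_nonneg (α := ℝ)])
  calc ‖s n / (((σ n : ℝ) + 1) ^ k * ((n : ℝ) + 1) ^ k)‖
      ≤ 1 / (((σ n : ℝ) + 1) ^ k * ((n : ℝ) + 1) ^ k) := by
        rw [norm_div, Real.norm_eq_abs, Real.norm_of_nonneg (by positivity)]
        gcongr
        exact hs n
    _ ≤ 1 / ((n + 1 : ℕ) : ℝ) ^ k := by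
        push_cast
        gcongr
        exact le_mul_of_one_le_left (by positivity) hσ

theorem stmt14 (f : ℕ → ℤ)
    (heven : ∀ N : ℕ, ∃ n, N ≤ n ∧ Even (f n))
    (hodd : ∀ N : ℕ, ∃ n, N ≤ n ∧ Odd (f n))
    (k : ℕ) (hk : 2 ≤ k) :
    ∃ g : ℕ → ℕ, (∀ n, 0 < g n) ∧
      (∑' n : ℕ, ((-1 : ℝ) ^ f (n + 1)) / ((g (n + 1) : ℝ) * (n + 1 : ℝ) ^ k)) = 0 := by
  let P : ℕ → Prop := fun n => Even (f (n + 1))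
  have hP : ∃ᶠ n in atTop, P n := frequently_atTop.mpr fun N => by
    obtain ⟨n, hn, he⟩ := heven (N + 1)
    exact ⟨n - 1, by omega, by simpa [P, show n - 1 + 1 = n by omega] using he⟩
  have hP' : ∃ᶠ n in atTop, ¬P n := frequently_atTop.mpr fun N => by
    obtain ⟨n, hn, ho⟩ := hodd (N + 1)
    exact ⟨n - 1, by omega, by simpa [P, show n - 1 + 1 = n by omega] using ho⟩
  let σ := (Nat.rankSwap_involutive hP hP').toPerm
  refine ⟨fun m => (σ (m - 1) + 1) ^ k, fun m => by positivity, ?_⟩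
  simp only [Nat.add_sub_cancel, Nat.cast_pow, Nat.cast_add, Nat.cast_one]
  refine (hasSum_zero_of_comp_perm_eq_neg ?_ σ fun n => ?_).tsum_eq
  · exact summable_div_mul_succ_pow (fun n => by simp) σ hk
  · have hsign : (-1 : ℝ) ^ f (σ n + 1) = -(-1) ^ f (n + 1) :=
      neg_one_zpow_eq_neg_of_even_iff_not_even (Nat.rankSwap_spec hP hP' n)
    have hσσ : σ (σ n) = n := Nat.rankSwap_involutive hP hP' n
    rw [hσσ, hsign]
    ring
end

section
/- Let {a_n} be a non-decreasing sequence of positive odd integers such that limsup_{n→∞} a_n^{1/A^n} = ∞ for every positive integer A. Let K be a positive integer and f_1,…,f_K : ℕ → ℤ arbitrary functions. For k = 1,…,K set α_k = Σ_{n=1}^∞ (−1)^{f_k(n)} / (a_n · 2^{n^k}). Then α_1,…,α_K are algebraically independent over ℚ. -/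
/-!
If `P(α) = 0` for a nonzero `P ∈ ℤ[x₁, …, x_K]` of total degree `d`, truncate each series after
`N` terms: `βₖ = oₖ / (Q_N · 2 ^ N ^ k)` with `oₖ` and `Q_N = a₁ ⋯ a_N` odd, and
`|βₖ - αₖ| ≤ 1 / a_{N+1}`, so `|P(β)| = |P(β) - P(α)| ≤ L / a_{N+1}` for a constant `L`.
Multiplied by `(Q_N · 2 ^ N ^ K) ^ d`, the monomial `x ^ e` of `P(β)` becomes an integer carrying
the factor `2 ^ (d N ^ K - Σₖ eₖ N ^ k)`. For `N > d` the weights `Σₖ eₖ N ^ k` are multiples of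
`N` with distinct base-`N` digits, so the monomial of largest weight has 2-adic valuation smaller by
at least `N` than all the others, while its coefficient is not divisible by `2 ^ N`: the cleared
value `Z` is a nonzero integer. The growth hypothesis supplies an `N` for which `a_{N+1}` exceeds
`L` times the clearing factor, whence `|Z| < 1`.
-/

open Filter Finset

lemma eventually_pow_le_two_pow (k : ℕ) : ∀ᶠ n : ℕ in atTop, n ^ k ≤ 2 ^ n := by
  filter_upwards [(tendsto_pow_const_div_const_pow_of_one_lt k one_lt_two).eventually_lt_const
    zero_lt_one] with n hn
  rw [div_lt_one (by positivity)] at hn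
  exact_mod_cast hn.le

lemma le_pow_pow_of_le_mul_pow {x : ℕ → ℝ} {M : ℝ} {B N₀ : ℕ} (hM : 1 ≤ M)
    (hx : ∀ n, 0 ≤ x n) (h₀ : x N₀ ≤ M ^ (2 * B + 2) ^ N₀)
    (hstep : ∀ n ≥ N₀, x (n + 1) ≤ M ^ (1 + B * 2 ^ n) * x n ^ (B + 1)) :
    ∀ n ≥ N₀, x n ≤ M ^ (2 * B + 2) ^ n := by
  intro n hn
  induction n, hn using Nat.le_induction with
  | base => exact h₀
  | succ n hn ih =>
    have h1 : 1 ≤ (2 * B + 2) ^ n := Nat.one_le_pow _ _ (by omega)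
    have h2 : 2 ^ n ≤ (2 * B + 2) ^ n := Nat.pow_le_pow_left (by omega) n
    calc x (n + 1) ≤ M ^ (1 + B * 2 ^ n) * x n ^ (B + 1) := hstep n hn
      _ ≤ M ^ (1 + B * 2 ^ n) * (M ^ (2 * B + 2) ^ n) ^ (B + 1) := by gcongr; exact hx n
      _ = M ^ (1 + B * 2 ^ n + (2 * B + 2) ^ n * (B + 1)) := by rw [← pow_mul, ← pow_add]
      _ ≤ M ^ (2 * B + 2) ^ (n + 1) := by
        refine pow_le_pow_right₀ hM ?_
        rw [pow_succ]
        nlinarith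

lemma not_frequently_lt_rpow_of_eventually_le {u : ℕ → ℝ} (hu : ∀ n, 0 ≤ u n) {A : ℕ}
    (hA : 0 < A) {M : ℝ} (hM : 0 ≤ M) (h : ∀ᶠ n in atTop, u n ≤ M ^ A ^ n) :
    ¬ ∃ᶠ n in atTop, M < u n ^ ((A : ℝ) ^ n)⁻¹ := by
  rw [not_frequently]
  filter_upwards [h] with n hn
  rw [not_lt]
  calc u n ^ ((A : ℝ) ^ n)⁻¹ ≤ (M ^ A ^ n) ^ ((A ^ n : ℕ) : ℝ)⁻¹ := by
        push_cast
        exact Real.rpow_le_rpow (hu n) hn (by positivity)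
    _ = M := Real.pow_rpow_inv_natCast hM (by positivity)

def partialProd (a : ℕ → ℕ) (N : ℕ) : ℕ := ∏ n ∈ range N, a (n + 1)

section partialProd

variable {a : ℕ → ℕ}

lemma partialProd_succ (N : ℕ) : partialProd a (N + 1) = partialProd a N * a (N + 1) :=
  prod_range_succ _ _

lemma one_le_partialProd (hpos : ∀ n, 1 ≤ n → 0 < a n) (N : ℕ) : 1 ≤ partialProd a N :=
  one_le_prod' fun n _ => hpos (n + 1) (by omega)

lemma le_partialProd (hpos : ∀ n, 1 ≤ n → 0 < a n) {N : ℕ} (hN : 1 ≤ N) :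
    a N ≤ partialProd a N := by
  obtain ⟨M, rfl⟩ := Nat.exists_eq_add_of_le' hN
  rw [partialProd_succ]
  exact Nat.le_mul_of_pos_left _ (one_le_partialProd hpos M)

lemma odd_partialProd (hodd : ∀ n, 1 ≤ n → Odd (a n)) (N : ℕ) : Odd (partialProd a N) :=
  prod_induction _ Odd (fun _ _ => Odd.mul) odd_one fun n _ => hodd (n + 1) (by omega)

/- Otherwise `partialProd a (N + 1) = partialProd a N * a (N + 1)` yields the double exponential
bound `partialProd a N ≤ M ^ (2 * B + 2) ^ N`, which the growth hypothesis forbids. -/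
lemma exists_mul_partialProd_pow_lt (hpos : ∀ n, 1 ≤ n → 0 < a n)
    (hlimsup : ∀ A : ℕ, 0 < A → ∀ C : ℝ,
      ∃ᶠ n : ℕ in atTop, C < (a n : ℝ) ^ (((A : ℝ) ^ n)⁻¹))
    (k B : ℕ) (C : ℝ) (N₀ : ℕ) :
    ∃ N ≥ N₀, C * ((partialProd a N : ℝ) * 2 ^ N ^ k) ^ B < a (N + 1) := by
  by_contra! h
  obtain ⟨N₁, hN₁⟩ :=
    eventually_atTop.mp ((eventually_ge_atTop N₀).and (eventually_pow_le_two_pow k))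
  set M : ℝ := max (max C 2) (partialProd a N₁)
  have hCM : C ≤ M := (le_max_left _ _).trans (le_max_left _ _)
  have h2M : 2 ≤ M := (le_max_right _ _).trans (le_max_left _ _)
  have hstep : ∀ n ≥ N₁, (partialProd a (n + 1) : ℝ) ≤
      M ^ (1 + B * 2 ^ n) * (partialProd a n : ℝ) ^ (B + 1) := by
    intro n hn
    obtain ⟨hn₀, hnk⟩ := hN₁ n hn
    have h2pow : (2 : ℝ) ^ n ^ k ≤ M ^ 2 ^ n :=
      (pow_le_pow_right₀ one_le_two hnk).trans (pow_le_pow_left₀ zero_le_two h2M _)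
    calc (partialProd a (n + 1) : ℝ) = partialProd a n * a (n + 1) := by
          rw [partialProd_succ]; push_cast; rfl
      _ ≤ partialProd a n * (M * ((partialProd a n : ℝ) * M ^ 2 ^ n) ^ B) := by
          gcongr
          calc (a (n + 1) : ℝ) ≤ C * ((partialProd a n : ℝ) * 2 ^ n ^ k) ^ B := h n hn₀
            _ ≤ M * ((partialProd a n : ℝ) * 2 ^ n ^ k) ^ B := by gcongr
            _ ≤ M * ((partialProd a n : ℝ) * M ^ 2 ^ n) ^ B := by gcongr
      _ = M ^ (1 + B * 2 ^ n) * (partialProd a n : ℝ) ^ (B + 1) := by ring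
  have hbound := le_pow_pow_of_le_mul_pow (x := fun n => (partialProd a n : ℝ)) (by linarith)
    (fun n => Nat.cast_nonneg _)
    ((le_max_right _ _).trans (le_self_pow₀ (by linarith) (by positivity))) hstep
  refine not_frequently_lt_rpow_of_eventually_le (fun n => Nat.cast_nonneg _)
    (by omega : 0 < 2 * B + 2) (by linarith) ?_
    (hlimsup (2 * B + 2) (by omega) M)
  filter_upwards [eventually_ge_atTop (N₁ + 1)] with n hn
  calc (a n : ℝ) ≤ partialProd a n := by exact_mod_cast le_partialProd hpos (by omega)
    _ ≤ M ^ (2 * B + 2) ^ n := hbound n (by omega)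

end partialProd

-- Indexed from `0`: `lacunaryTerm a ε κ n` is the term of index `n + 1`, with sign `ε n`.
noncomputable def lacunaryTerm (a : ℕ → ℕ) (ε : ℕ → ℤˣ) (κ n : ℕ) : ℝ :=
  ((ε n : ℤ) : ℝ) / ((a (n + 1) : ℝ) * 2 ^ (n + 1) ^ κ)

def lacunaryNum (a : ℕ → ℕ) (ε : ℕ → ℤˣ) (κ N : ℕ) : ℤ :=
  ∑ n ∈ range N,
    (ε n : ℤ) * (∏ m ∈ (range N).erase n, (a (m + 1) : ℤ)) * 2 ^ (N ^ κ - (n + 1) ^ κ)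

section lacunary

variable {a : ℕ → ℕ} {ε : ℕ → ℤˣ} {κ : ℕ}

lemma abs_lacunaryTerm_add_le (hmono : Monotone a) (hpos : ∀ n, 1 ≤ n → 0 < a n) (hκ : 1 ≤ κ)
    (N i : ℕ) : |lacunaryTerm a ε κ (i + N)| ≤ (a (N + 1) : ℝ)⁻¹ / 2 / 2 ^ i := by
  have ha : (0 : ℝ) < a (N + 1) := by exact_mod_cast hpos (N + 1) le_add_self
  have han : (a (N + 1) : ℝ) ≤ a (i + N + 1) := by exact_mod_cast hmono (by omega)
  have h2 : (2 : ℝ) * 2 ^ i ≤ 2 ^ (i + N + 1) ^ κ := by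
    rw [← pow_succ']
    exact pow_le_pow_right₀ one_le_two
      ((by omega : i + 1 ≤ i + N + 1).trans (Nat.le_self_pow (by omega) _))
  rw [lacunaryTerm, abs_div, abs_unit_intCast, abs_of_pos (by positivity [ha.trans_le han]),
    show (a (N + 1) : ℝ)⁻¹ / 2 / 2 ^ i = 1 / (a (N + 1) * (2 * 2 ^ i)) by ring]
  gcongr

lemma summable_lacunaryTerm (hmono : Monotone a) (hpos : ∀ n, 1 ≤ n → 0 < a n) (hκ : 1 ≤ κ) :
    Summable (lacunaryTerm a ε κ) :=
  .of_norm_bounded (summable_geometric_two' _) fun n => abs_lacunaryTerm_add_le hmono hpos hκ 0 n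

lemma abs_tsum_sub_sum_range_lacunaryTerm_le (hmono : Monotone a) (hpos : ∀ n, 1 ≤ n → 0 < a n)
    (hκ : 1 ≤ κ) (N : ℕ) :
    |∑' n, lacunaryTerm a ε κ n - ∑ n ∈ range N, lacunaryTerm a ε κ n| ≤ (a (N + 1) : ℝ)⁻¹ := by
  rw [← (summable_lacunaryTerm hmono hpos hκ).sum_add_tsum_nat_add N, add_sub_cancel_left]
  exact tsum_of_norm_bounded (f := fun i => lacunaryTerm a ε κ (i + N)) (hasSum_geometric_two' _)
    (abs_lacunaryTerm_add_le hmono hpos hκ N)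

lemma abs_tsum_lacunaryTerm_le_one (hmono : Monotone a) (hpos : ∀ n, 1 ≤ n → 0 < a n)
    (hκ : 1 ≤ κ) : |∑' n, lacunaryTerm a ε κ n| ≤ 1 :=
  (tsum_of_norm_bounded (f := lacunaryTerm a ε κ) (hasSum_geometric_two' _)
    (abs_lacunaryTerm_add_le hmono hpos hκ 0)).trans
    (inv_le_one_of_one_le₀ (Nat.one_le_cast.mpr (hpos 1 le_rfl)))

lemma abs_sum_range_lacunaryTerm_le_one (hmono : Monotone a) (hpos : ∀ n, 1 ≤ n → 0 < a n)
    (hκ : 1 ≤ κ) (N : ℕ) : |∑ n ∈ range N, lacunaryTerm a ε κ n| ≤ 1 := by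
  refine (abs_sum_le_sum_abs _ _).trans <| (sum_le_sum fun n _ =>
    abs_lacunaryTerm_add_le hmono hpos hκ 0 n).trans <| (sum_le_hasSum _ (fun n _ => by positivity)
    (hasSum_geometric_two' _)).trans ?_
  exact inv_le_one_of_one_le₀ (Nat.one_le_cast.mpr (hpos 1 le_rfl))

lemma sum_range_lacunaryTerm_eq (hpos : ∀ n, 1 ≤ n → 0 < a n) (N : ℕ) :
    ∑ n ∈ range N, lacunaryTerm a ε κ n =
      lacunaryNum a ε κ N / ((partialProd a N : ℝ) * 2 ^ N ^ κ) := by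
  have hP : (0 : ℝ) < partialProd a N := by exact_mod_cast one_le_partialProd hpos N
  rw [eq_div_iff (by positivity), sum_mul, lacunaryNum, partialProd]
  push_cast
  refine sum_congr rfl fun n hn => ?_
  have hn' : n + 1 ≤ N := mem_range.mp hn
  rw [← mul_prod_erase _ _ hn, ← pow_mul_pow_sub 2 (Nat.pow_le_pow_left hn' κ), lacunaryTerm]
  have : (a (n + 1) : ℝ) ≠ 0 := by exact_mod_cast (hpos (n + 1) le_add_self).ne'
  field_simp

lemma odd_lacunaryNum (hodd : ∀ n, 1 ≤ n → Odd (a n)) (hκ : 1 ≤ κ) {N : ℕ} (hN : 1 ≤ N) :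
    Odd (lacunaryNum a ε κ N) := by
  obtain ⟨M, rfl⟩ := Nat.exists_eq_add_of_le' hN
  rw [lacunaryNum, sum_range_succ, Nat.sub_self, pow_zero, mul_one]
  refine Even.add_odd (even_iff_two_dvd.mpr (dvd_sum fun n hn => ?_))
    ((Int.natAbs_odd.mp (by rw [Int.units_natAbs]; exact odd_one)).mul ?_)
  · have hlt : (n + 1) ^ κ < (M + 1) ^ κ := Nat.pow_lt_pow_left (by simpa using hn) (by omega)
    exact (dvd_pow_self 2 (by omega)).mul_left _
  · exact prod_induction _ Odd (fun _ _ => Odd.mul) odd_one fun m _ => by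
      exact_mod_cast hodd (m + 1) le_add_self

end lacunary

lemma abs_prod_sub_prod_le_sum {ι : Type*} (s : Finset ι) {u v : ι → ℝ} (hu : ∀ i ∈ s, |u i| ≤ 1)
    (hv : ∀ i ∈ s, |v i| ≤ 1) : |∏ i ∈ s, u i - ∏ i ∈ s, v i| ≤ ∑ i ∈ s, |u i - v i| := by
  classical
  induction s using Finset.induction_on with
  | empty => simp
  | insert j s hj ih =>
    rw [prod_insert hj, prod_insert hj, sum_insert hj,
      show u j * ∏ i ∈ s, u i - v j * ∏ i ∈ s, v i
        = u j * (∏ i ∈ s, u i - ∏ i ∈ s, v i) + (u j - v j) * ∏ i ∈ s, v i by ring]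
    have hvs : |∏ i ∈ s, v i| ≤ 1 := by
      rw [abs_prod]
      exact prod_le_one (fun _ _ => abs_nonneg _) fun i hi => hv i (mem_insert_of_mem hi)
    calc |u j * (∏ i ∈ s, u i - ∏ i ∈ s, v i) + (u j - v j) * ∏ i ∈ s, v i|
        ≤ |u j| * |∏ i ∈ s, u i - ∏ i ∈ s, v i| + |u j - v j| * |∏ i ∈ s, v i| := by
          rw [← abs_mul, ← abs_mul]; exact abs_add_le _ _
      _ ≤ 1 * ∑ i ∈ s, |u i - v i| + |u j - v j| * 1 := by
          gcongr
          · exact hu j (mem_insert_self j s)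
          · exact ih (fun i hi => hu i (mem_insert_of_mem hi))
              fun i hi => hv i (mem_insert_of_mem hi)
      _ = |u j - v j| + ∑ i ∈ s, |u i - v i| := by ring

lemma abs_pow_sub_pow_le_of_abs_le_one {x y : ℝ} (hx : |x| ≤ 1) (hy : |y| ≤ 1) (n : ℕ) :
    |x ^ n - y ^ n| ≤ n * |x - y| :=
  calc |x ^ n - y ^ n| ≤ |x - y| * n * max |x| |y| ^ (n - 1) := abs_pow_sub_pow_le x y n
    _ ≤ |x - y| * n * 1 := by gcongr; exact pow_le_one₀ (by positivity) (max_le hx hy)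
    _ = n * |x - y| := by ring

lemma sum_le_totalDegree {σ R : Type*} [Fintype σ] [CommSemiring R] {p : MvPolynomial σ R}
    {e : σ →₀ ℕ} (he : e ∈ p.support) : ∑ i, e i ≤ p.totalDegree := by
  simpa [Finsupp.sum_fintype] using MvPolynomial.le_totalDegree he

open MvPolynomial in
lemma abs_aeval_sub_aeval_le {σ R : Type*} [Fintype σ] [CommSemiring R] [Algebra R ℝ]
    (p : MvPolynomial σ R) {x y : σ → ℝ} {δ : ℝ} (hδ : 0 ≤ δ) (hx : ∀ i, |x i| ≤ 1)
    (hy : ∀ i, |y i| ≤ 1) (hxy : ∀ i, |x i - y i| ≤ δ) :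
    |aeval x p - aeval y p| ≤
      (∑ e ∈ p.support, |algebraMap R ℝ (p.coeff e)|) * p.totalDegree * δ := by
  rw [aeval_eq_eval₂Hom, aeval_eq_eval₂Hom, coe_eval₂Hom, coe_eval₂Hom, eval₂_eq', eval₂_eq',
    ← sum_sub_distrib, sum_mul, sum_mul]
  refine (abs_sum_le_sum_abs _ _).trans (sum_le_sum fun e he => ?_)
  rw [← mul_sub, abs_mul, mul_assoc]
  gcongr
  calc |∏ i, x i ^ e i - ∏ i, y i ^ e i| ≤ ∑ i, |x i ^ e i - y i ^ e i| :=
        abs_prod_sub_prod_le_sum _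
          (fun i _ => by rw [abs_pow]; exact pow_le_one₀ (abs_nonneg _) (hx i))
          fun i _ => by rw [abs_pow]; exact pow_le_one₀ (abs_nonneg _) (hy i)
    _ ≤ ∑ i, (e i : ℝ) * δ := sum_le_sum fun i _ =>
        (abs_pow_sub_pow_le_of_abs_le_one (hx i) (hy i) _).trans (by gcongr; exact hxy i)
    _ ≤ p.totalDegree * δ := by
        rw [← sum_mul]
        gcongr
        exact_mod_cast sum_le_totalDegree he

lemma sum_mul_le_totalDegree_mul {σ R : Type*} [Fintype σ] [CommSemiring R] {p : MvPolynomial σ R}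
    {e : σ →₀ ℕ} (he : e ∈ p.support) {w : σ → ℕ} {M : ℕ} (hw : ∀ i, w i ≤ M) :
    ∑ i, e i * w i ≤ p.totalDegree * M :=
  calc ∑ i, e i * w i ≤ ∑ i, e i * M := sum_le_sum fun i _ => Nat.mul_le_mul_left _ (hw i)
    _ = (∑ i, e i) * M := (sum_mul ..).symm
    _ ≤ _ := Nat.mul_le_mul_right _ (sum_le_totalDegree he)

open MvPolynomial in
lemma mul_aeval_div_eq_sum {σ : Type*} [Fintype σ] (p : MvPolynomial σ ℤ) (o : σ → ℤ) {P : ℕ}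
    (hP : P ≠ 0) (w : σ → ℕ) {M : ℕ} (hw : ∀ i, w i ≤ M) :
    ((P : ℝ) * 2 ^ M) ^ p.totalDegree * aeval (fun i => (o i : ℝ) / (P * 2 ^ w i)) p =
      ((∑ e ∈ p.support, p.coeff e * ((∏ i, o i ^ e i) * P ^ (p.totalDegree - ∑ i, e i)) *
        2 ^ (p.totalDegree * M - ∑ i, e i * w i) : ℤ) : ℝ) := by
  rw [aeval_eq_eval₂Hom, coe_eval₂Hom, eval₂_eq', mul_sum]
  push_cast
  refine sum_congr rfl fun e he => ?_
  have hdeg := sum_le_totalDegree he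
  have hwdeg := sum_mul_le_totalDegree_mul he hw
  have hprod : ∏ i, ((o i : ℝ) / (P * 2 ^ w i)) ^ e i =
      (∏ i, (o i : ℝ) ^ e i) / ((P : ℝ) ^ (∑ i, e i) * 2 ^ ∑ i, e i * w i) := by
    simp only [div_pow, mul_pow, prod_div_distrib, prod_mul_distrib, prod_pow_eq_pow_sum, ← pow_mul,
      mul_comm (w _)]
  have hscale : ((P : ℝ) * 2 ^ M) ^ p.totalDegree = (P : ℝ) ^ (∑ i, e i) * 2 ^ (∑ i, e i * w i) *
      ((P : ℝ) ^ (p.totalDegree - ∑ i, e i) * 2 ^ (p.totalDegree * M - ∑ i, e i * w i)) := by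
    rw [mul_pow, ← pow_mul, mul_comm M, ← pow_mul_pow_sub (P : ℝ) hdeg,
      ← pow_mul_pow_sub (2 : ℝ) hwdeg]
    ring
  have : (P : ℝ) ≠ 0 := by exact_mod_cast hP
  rw [hprod, hscale, algebraMap_int_eq, eq_intCast]
  field_simp

lemma sum_mul_pow_ne_zero {ι : Type*} {s : Finset ι} {w : ι → ℤ} {m : ι → ℕ} {b : ℤ} (hb : b ≠ 0)
    {g : ℕ} {i₀ : ι} (hi₀ : i₀ ∈ s) (hw : ¬ b ^ g ∣ w i₀)
    (hm : ∀ i ∈ s, i ≠ i₀ → m i₀ + g ≤ m i) : ∑ i ∈ s, w i * b ^ m i ≠ 0 := by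
  classical
  intro h
  rw [← add_sum_erase s _ hi₀, add_eq_zero_iff_eq_neg] at h
  have hrest : b ^ (m i₀ + g) ∣ ∑ i ∈ s.erase i₀, w i * b ^ m i := dvd_sum fun i hi =>
    (pow_dvd_pow b (hm i (mem_of_mem_erase hi) (ne_of_mem_erase hi))).mul_left _
  refine hw ((mul_dvd_mul_iff_left (pow_ne_zero (m i₀) hb)).mp ?_)
  rw [← pow_add, mul_comm, h]
  exact hrest.neg_right

lemma not_two_pow_dvd_mul_of_odd {c u : ℤ} {g : ℕ} (hc : c ≠ 0) (hcg : c.natAbs < 2 ^ g)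
    (hu : Odd u) : ¬ (2 : ℤ) ^ g ∣ c * u := by
  intro h
  have hcop : IsCoprime ((2 : ℤ) ^ g) u := (Int.isCoprime_two_left.mpr hu).pow_left
  have := Int.natAbs_le_of_dvd_ne_zero (hcop.dvd_of_dvd_mul_right h) hc
  rw [Int.natAbs_pow] at this
  norm_num at this
  omega

lemma eq_of_sum_mul_pow_eq {K N : ℕ} {g h : Fin K → ℕ} (hg : ∀ i, g i < N) (hh : ∀ i, h i < N)
    (he : ∑ i, g i * N ^ (i : ℕ) = ∑ i, h i * N ^ (i : ℕ)) : g = h := by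
  have := finFunctionFinEquiv.injective (a₁ := fun i => (⟨g i, hg i⟩ : Fin N))
    (a₂ := fun i => ⟨h i, hh i⟩) (Fin.ext (by simpa [finFunctionFinEquiv_apply] using he))
  funext i
  simpa using congrFun this i

open MvPolynomial in
lemma exists_int_ne_zero_eq_mul_aeval {K N P : ℕ} (p : MvPolynomial (Fin K) ℤ) (hp : p ≠ 0)
    (hdN : p.totalDegree < N) (hcN : ∀ e ∈ p.support, (p.coeff e).natAbs < 2 ^ N) (hP : Odd P)
    {o : Fin K → ℤ} (ho : ∀ i, Odd (o i)) :
    ∃ Z : ℤ, Z ≠ 0 ∧ (Z : ℝ) = ((P : ℝ) * 2 ^ N ^ K) ^ p.totalDegree *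
      aeval (fun i => (o i : ℝ) / (P * 2 ^ N ^ ((i : ℕ) + 1))) p := by
  have hw : ∀ i : Fin K, N ^ ((i : ℕ) + 1) ≤ N ^ K := fun i =>
    Nat.pow_le_pow_right (by omega) i.isLt
  refine ⟨_, ?_, (mul_aeval_div_eq_sum p o hP.pos.ne' _ hw).symm⟩
  set S : (Fin K →₀ ℕ) → ℕ := fun e => ∑ i, e i * N ^ ((i : ℕ) + 1)
  obtain ⟨e₀, he₀, hmax⟩ := p.support.exists_max_image S (support_nonempty.mpr hp)
  have hdigit : ∀ e ∈ p.support, ∀ i, e i < N := fun e he i =>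
    ((single_le_sum (fun j _ => Nat.zero_le (e j)) (mem_univ i)).trans
      (sum_le_totalDegree he)).trans_lt hdN
  have hS : ∀ e, S e = N * ∑ i, e i * N ^ (i : ℕ) := fun e => by
    simp only [S, mul_sum]
    exact sum_congr rfl fun i _ => by ring
  refine sum_mul_pow_ne_zero two_ne_zero he₀
    (not_two_pow_dvd_mul_of_odd (mem_support_iff.mp he₀) (hcN e₀ he₀) ?_) fun e he hne => ?_
  · exact (prod_induction _ Odd (fun _ _ => Odd.mul) odd_one fun i _ => (ho i).pow).mul
      (by exact_mod_cast hP.pow)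
  · have hlt : S e < S e₀ := (hmax e he).lt_of_ne fun hSe => hne <| Finsupp.ext <| congrFun <|
      eq_of_sum_mul_pow_eq (hdigit e he) (hdigit e₀ he₀) <|
        Nat.eq_of_mul_eq_mul_left ((Nat.zero_le _).trans_lt hdN) (by rwa [hS, hS] at hSe)
    have hgap : S e + N ≤ S e₀ := by
      rw [hS, hS] at hlt ⊢
      have := Nat.lt_of_mul_lt_mul_left hlt
      nlinarith
    have hS₀ : S e₀ ≤ p.totalDegree * N ^ K := sum_mul_le_totalDegree_mul he₀ hw
    show p.totalDegree * N ^ K - S e₀ + N ≤ p.totalDegree * N ^ K - S e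
    omega

open MvPolynomial in
theorem aeval_tsum_lacunaryTerm_ne_zero {a : ℕ → ℕ} (hmono : Monotone a)
    (hodd : ∀ n, 1 ≤ n → Odd (a n))
    (hlimsup : ∀ A : ℕ, 0 < A → ∀ C : ℝ,
      ∃ᶠ n : ℕ in atTop, C < (a n : ℝ) ^ (((A : ℝ) ^ n)⁻¹))
    {K : ℕ} (ε : Fin K → ℕ → ℤˣ) {p : MvPolynomial (Fin K) ℤ} (hp : p ≠ 0) :
    aeval (fun k : Fin K => ∑' n, lacunaryTerm a (ε k) ((k : ℕ) + 1) n) p ≠ 0 := by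
  intro hzero
  have hpos : ∀ n, 1 ≤ n → 0 < a n := fun n hn => (hodd n hn).pos
  set L := (∑ e ∈ p.support, |algebraMap ℤ ℝ (p.coeff e)|) * p.totalDegree
  set V := p.support.sup fun e => (p.coeff e).natAbs
  obtain ⟨N, hN, hbig⟩ := exists_mul_partialProd_pow_lt hpos hlimsup K p.totalDegree L
    (max (p.totalDegree + 1) (V + 1))
  have hdN : p.totalDegree < N := (le_max_left _ _).trans hN
  have hVN : V < N := (le_max_right _ _).trans hN
  have hcN : ∀ e ∈ p.support, (p.coeff e).natAbs < 2 ^ N := fun e he =>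
    ((le_sup (f := fun e => (p.coeff e).natAbs) he).trans_lt hVN).trans Nat.lt_two_pow_self
  set β : Fin K → ℝ := fun k => ∑ n ∈ range N, lacunaryTerm a (ε k) ((k : ℕ) + 1) n
  have hβ : β = fun k => (lacunaryNum a (ε k) ((k : ℕ) + 1) N : ℝ) /
      (partialProd a N * 2 ^ N ^ ((k : ℕ) + 1)) :=
    funext fun k => sum_range_lacunaryTerm_eq hpos N
  obtain ⟨Z, hZ0, hZ⟩ := exists_int_ne_zero_eq_mul_aeval p hp hdN hcN
    (odd_partialProd hodd N) fun k => odd_lacunaryNum hodd le_add_self (Nat.one_le_of_lt hdN)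
  rw [← hβ] at hZ
  have hclose : |aeval β p| ≤ L * (a (N + 1) : ℝ)⁻¹ := by
    rw [← sub_zero (aeval β p), ← hzero]
    exact abs_aeval_sub_aeval_le p (by positivity)
      (fun k => abs_sum_range_lacunaryTerm_le_one hmono hpos le_add_self N)
      (fun k => abs_tsum_lacunaryTerm_le_one hmono hpos le_add_self)
      fun k => by
        rw [abs_sub_comm]
        exact abs_tsum_sub_sum_range_lacunaryTerm_le hmono hpos le_add_self N
  set X := ((partialProd a N : ℝ) * 2 ^ N ^ K) ^ p.totalDegree
  have hX : 0 < X := by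
    have hP := one_le_partialProd hpos N
    positivity
  have ha : (0 : ℝ) < a (N + 1) := by exact_mod_cast hpos (N + 1) le_add_self
  have hZ_ge : (1 : ℝ) ≤ |(Z : ℝ)| := by exact_mod_cast Int.one_le_abs hZ0
  have hZ_lt : |(Z : ℝ)| < 1 :=
    calc |(Z : ℝ)| = X * |aeval β p| := by rw [hZ, abs_mul, abs_of_pos hX]
      _ ≤ X * (L * (a (N + 1) : ℝ)⁻¹) := by gcongr
      _ = L * X / a (N + 1) := by ring
      _ < 1 := (div_lt_one ha).mpr hbig
  linarith

theorem stmt15_general (a : ℕ → ℕ) (hmono : Monotone a)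
    (hodd : ∀ n, 1 ≤ n → Odd (a n))
    (hlimsup : ∀ A : ℕ, 0 < A → ∀ C : ℝ,
      ∃ᶠ n : ℕ in atTop, C < (a n : ℝ) ^ (((A : ℝ) ^ n)⁻¹))
    (K : ℕ) (f : Fin K → ℕ → ℤ) :
    AlgebraicIndependent ℚ (fun k : Fin K => ∑' n : ℕ,
      ((-1 : ℝ) ^ f k (n + 1)) / ((a (n + 1) : ℝ) * 2 ^ ((n + 1) ^ (k.val + 1)))) := by
  have := IsLocalization.isAlgebraic ℚ (nonZeroDivisors ℤ)
  refine .extendScalars (R := ℤ) ℚ (algebraicIndependent_iff.mpr fun p hp => ?_)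
  by_contra hp0
  refine aeval_tsum_lacunaryTerm_ne_zero hmono hodd hlimsup
    (fun k n => (f k (n + 1)).negOnePow) hp0 ?_
  simpa only [lacunaryTerm, Int.cast_negOnePow] using hp

theorem stmt15 (a : ℕ → ℕ) (hmono : Monotone a)
    (hodd : ∀ n, 1 ≤ n → Odd (a n)) (hpos : ∀ n, 1 ≤ n → 0 < a n)
    (hlimsup : ∀ A : ℕ, 0 < A → ∀ C : ℝ,
      ∃ᶠ n : ℕ in atTop, C < (a n : ℝ) ^ (((A : ℝ) ^ n)⁻¹))
    (K : ℕ) (hK : 0 < K) (f : Fin K → ℕ → ℤ) :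
    AlgebraicIndependent ℚ (fun k : Fin K => ∑' n : ℕ,
      ((-1 : ℝ) ^ f k (n + 1)) / ((a (n + 1) : ℝ) * 2 ^ ((n + 1) ^ (k.val + 1)))) :=
  stmt15_general a hmono hodd hlimsup K f
end

section
/- Let {a_n}, {b_n} be sequences of positive integers with a_n non-decreasing, a_n ≥ n^{1+ε} for some ε > 0 and all large n, b_n ≤ 2^{(log₂ a_n)^κ} for some 0 < κ < 1 and all large n. Then there is a fixed 0 < Γ < 1 such that for all sufficiently large N and Q with N ≤ Q: if a_n ≥ 2^n for all n with N ≤ n ≤ Q, then Σ_{n=N}^{Q} b_n/a_n ≤ 2^{(log₂ a_N)^Γ} / a_N. -/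
open Filter Real

private lemma rpow_subadd {κ : ℝ} (hκ0 : 0 < κ) (hκ1 : κ ≤ 1) {x y : ℝ}
    (hx : 0 ≤ x) (hy : 0 ≤ y) : (x + y) ^ κ ≤ x ^ κ + y ^ κ := by
  rcases eq_or_lt_of_le hx with h0 | hx'
  · simp [← h0, Real.zero_rpow hκ0.ne']
  rcases eq_or_lt_of_le hy with h0 | hy'
  · simp [← h0, Real.zero_rpow hκ0.ne']
  have hxy : 0 < x + y := by linarith
  have h1 : (x + y) ^ κ = x * (x + y) ^ (κ - 1) + y * (x + y) ^ (κ - 1) := by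
    rw [← add_mul, mul_comm, ← Real.rpow_add_one hxy.ne']
    ring_nf
  rw [h1]
  have h2 : (x + y) ^ (κ - 1) ≤ x ^ (κ - 1) :=
    Real.rpow_le_rpow_of_nonpos hx' (by linarith) (by linarith)
  have h3 : (x + y) ^ (κ - 1) ≤ y ^ (κ - 1) :=
    Real.rpow_le_rpow_of_nonpos hy' (by linarith) (by linarith)
  have h4 : x * (x + y) ^ (κ - 1) ≤ x ^ κ := by
    calc x * (x + y) ^ (κ - 1) ≤ x * x ^ (κ - 1) := by
          exact mul_le_mul_of_nonneg_left h2 hx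
      _ = x ^ κ := by rw [mul_comm, ← Real.rpow_add_one hx'.ne']; ring_nf
  have h5 : y * (x + y) ^ (κ - 1) ≤ y ^ κ := by
    calc y * (x + y) ^ (κ - 1) ≤ y * y ^ (κ - 1) := by
          exact mul_le_mul_of_nonneg_left h3 hy
      _ = y ^ κ := by rw [mul_comm, ← Real.rpow_add_one hy'.ne']; ring_nf
  linarith

private lemma rpow_le_const_add_half {κ : ℝ} (hκ0 : 0 < κ) (hκ1 : κ < 1) {x : ℝ}
    (hx : 0 ≤ x) : x ^ κ ≤ (2 : ℝ) ^ (1 / (1 - κ)) + x / 2 := by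
  set M : ℝ := (2 : ℝ) ^ (1 / (1 - κ)) with hM
  have hMpos : 0 < M := Real.rpow_pos_of_pos two_pos _
  have hM1 : 1 ≤ M := Real.one_le_rpow one_le_two (div_nonneg zero_le_one (by linarith))
  rcases le_total x M with h | h
  · have : x ^ κ ≤ M ^ κ := Real.rpow_le_rpow hx h hκ0.le
    have h2 : M ^ κ ≤ M ^ (1 : ℝ) := Real.rpow_le_rpow_of_exponent_le hM1 hκ1.le
    rw [Real.rpow_one] at h2
    nlinarith
  · have hx' : 0 < x := lt_of_lt_of_le hMpos h
    have h2 : x ^ (κ - 1) ≤ M ^ (κ - 1) :=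
      Real.rpow_le_rpow_of_nonpos hMpos h (by linarith)
    have h3 : M ^ (κ - 1) = 1 / 2 := by
      rw [hM, ← Real.rpow_mul (by norm_num)]
      have : 1 / (1 - κ) * (κ - 1) = -1 := by
        rw [div_mul_eq_mul_div, one_mul, div_eq_iff (by linarith : (1:ℝ) - κ ≠ 0)]
        ring
      rw [this, Real.rpow_neg_one]
      norm_num
    have h4 : x ^ κ = x * x ^ (κ - 1) := by
      rw [mul_comm, ← Real.rpow_add_one hx'.ne']; ring_nf
    have : x ^ κ ≤ x * (1 / 2) := by
      rw [h4, ← h3]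
      exact mul_le_mul_of_nonneg_left h2 hx'.le
    nlinarith

private lemma decay_bound {κ : ℝ} (hκ0 : 0 < κ) (hκ1 : κ < 1) {x y : ℝ}
    (hx : 0 ≤ x) (hxy : x ≤ y) :
    y ^ κ - y ≤ (x ^ κ - x) + (2 : ℝ) ^ (1 / (1 - κ)) - (y - x) / 2 := by
  have h1 : y ^ κ = (x + (y - x)) ^ κ := by ring_nf
  have h2 : (x + (y - x)) ^ κ ≤ x ^ κ + (y - x) ^ κ :=
    rpow_subadd hκ0 hκ1.le hx (by linarith)
  have h3 : (y - x) ^ κ ≤ (2 : ℝ) ^ (1 / (1 - κ)) + (y - x) / 2 :=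
    rpow_le_const_add_half hκ0 hκ1 (by linarith)
  rw [h1]
  linarith

private lemma sum_decay (L : ℝ) (hL : 0 ≤ L) (N Q T : ℕ) (hT : L ≤ T) :
    ∑ n ∈ Finset.Icc N Q, (2 : ℝ) ^ (-(max ((n : ℝ) - L) 0) / 2) ≤ (T : ℝ) + 5 := by
  set r : ℝ := (2 : ℝ) ^ (-(1 / 2 : ℝ)) with hrdef
  have hr0 : 0 < r := Real.rpow_pos_of_pos two_pos _
  have hr2 : r ^ (2 : ℕ) = 1 / 2 := by
    rw [hrdef, ← Real.rpow_natCast ((2:ℝ) ^ (-(1/2:ℝ))) 2, ← Real.rpow_mul (by norm_num)]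
    norm_num
  have hr34 : r ≤ 3 / 4 := by nlinarith
  have hterm_nonneg : ∀ n : ℕ, (0 : ℝ) ≤ (2 : ℝ) ^ (-(max ((n : ℝ) - L) 0) / 2) :=
    fun n => (Real.rpow_pos_of_pos two_pos _).le
  have hsub : Finset.Icc N Q ⊆ Finset.Icc 0 T ∪ Finset.Icc (T + 1) Q := by
    intro n hn
    simp only [Finset.mem_union, Finset.mem_Icc] at *
    omega
  calc ∑ n ∈ Finset.Icc N Q, (2 : ℝ) ^ (-(max ((n : ℝ) - L) 0) / 2)
      ≤ ∑ n ∈ Finset.Icc 0 T ∪ Finset.Icc (T + 1) Q,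
          (2 : ℝ) ^ (-(max ((n : ℝ) - L) 0) / 2) := by
        exact Finset.sum_le_sum_of_subset_of_nonneg hsub (fun n _ _ => hterm_nonneg n)
    _ = (∑ n ∈ Finset.Icc 0 T, (2 : ℝ) ^ (-(max ((n : ℝ) - L) 0) / 2)) +
          ∑ n ∈ Finset.Icc (T + 1) Q, (2 : ℝ) ^ (-(max ((n : ℝ) - L) 0) / 2) := by
        apply Finset.sum_union
        simp only [Finset.disjoint_left, Finset.mem_Icc]
        intro x hx hx2
        omega
    _ ≤ (T : ℝ) + 1 + 4 := by
        gcongr ?_ + ?_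
        · calc ∑ n ∈ Finset.Icc 0 T, (2 : ℝ) ^ (-(max ((n : ℝ) - L) 0) / 2)
              ≤ ∑ n ∈ Finset.Icc 0 T, (1 : ℝ) := by
                apply Finset.sum_le_sum
                intro n _
                apply Real.rpow_le_one_of_one_le_of_nonpos one_le_two
                have : (0 : ℝ) ≤ max ((n : ℝ) - L) 0 := le_max_right _ _
                linarith
            _ = (T : ℝ) + 1 := by
                rw [Finset.sum_const, Nat.card_Icc]
                simp
        · have hbd : ∀ n ∈ Finset.Icc (T + 1) Q,
              (2 : ℝ) ^ (-(max ((n : ℝ) - L) 0) / 2) ≤ r ^ (n - T) := by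
            intro n hn
            simp only [Finset.mem_Icc] at hn
            have hnT : T + 1 ≤ n := hn.1
            have hcast : (T : ℝ) ≤ (n : ℝ) - 1 := by
              have : (T : ℝ) + 1 ≤ n := by exact_mod_cast hnT
              linarith
            have hmax : max ((n : ℝ) - L) 0 = (n : ℝ) - L := by
              apply max_eq_left; linarith
            have h1 : (2 : ℝ) ^ (-(max ((n : ℝ) - L) 0) / 2)
                ≤ (2 : ℝ) ^ (-((n : ℝ) - (T : ℝ)) / 2) := by
              apply Real.rpow_le_rpow_of_exponent_le one_le_two
              rw [hmax]; linarith
            have h2 : (2 : ℝ) ^ (-((n : ℝ) - (T : ℝ)) / 2) = r ^ (n - T) := by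
              rw [hrdef, ← Real.rpow_natCast ((2:ℝ) ^ (-(1/2:ℝ))) (n - T),
                ← Real.rpow_mul (by norm_num)]
              congr 1
              have : ((n - T : ℕ) : ℝ) = (n : ℝ) - (T : ℝ) := by
                have : T ≤ n := by omega
                push_cast [this]; ring
              rw [this]; ring
            rw [← h2]; exact h1
          calc ∑ n ∈ Finset.Icc (T + 1) Q, (2 : ℝ) ^ (-(max ((n : ℝ) - L) 0) / 2)
              ≤ ∑ n ∈ Finset.Icc (T + 1) Q, r ^ (n - T) := Finset.sum_le_sum hbd
            _ = ∑ k ∈ Finset.range (Q + 1 - (T + 1)), r ^ ((T + 1 + k) - T) := by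
                rw [← Finset.Ico_add_one_right_eq_Icc, Finset.sum_Ico_eq_sum_range]
            _ = ∑ k ∈ Finset.range (Q + 1 - (T + 1)), r ^ (k + 1) := by
                apply Finset.sum_congr rfl
                intro k _
                congr 1
                omega
            _ ≤ ∑ k ∈ Finset.range (Q + 1 - (T + 1)), r ^ k := by
                apply Finset.sum_le_sum
                intro k _
                exact pow_le_pow_of_le_one hr0.le (by linarith) (by omega)
            _ ≤ ∑' k : ℕ, r ^ k := by
                apply Summable.sum_le_tsum
                · intro k _; positivity
                · exact summable_geometric_of_lt_one hr0.le (by linarith)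
            _ = (1 - r)⁻¹ := tsum_geometric_of_lt_one hr0.le (by linarith)
            _ ≤ 4 := by
                rw [inv_le_comm₀ (by linarith) (by norm_num)]
                linarith
  linarith

set_option maxHeartbeats 1000000 in
theorem stmt18 (a b : ℕ → ℕ) (hapos : ∀ n, 0 < a n) (hbpos : ∀ n, 0 < b n)
    (hmono : Monotone a)
    (ε : ℝ) (hε : 0 < ε) (hgrow : ∀ᶠ n : ℕ in atTop, (n : ℝ) ^ (1 + ε) ≤ (a n : ℝ))
    (κ : ℝ) (hκ0 : 0 < κ) (hκ1 : κ < 1)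
    (hbbd : ∀ᶠ n : ℕ in atTop, (b n : ℝ) ≤ 2 ^ (Real.logb 2 (a n) ^ κ)) :
    ∃ Γ : ℝ, 0 < Γ ∧ Γ < 1 ∧ ∃ N₀ : ℕ, ∀ N Q : ℕ, N₀ ≤ N → N₀ ≤ Q → N ≤ Q →
      (∀ n, N ≤ n → n ≤ Q → 2 ^ n ≤ a n) →
      (∑ n ∈ Finset.Icc N Q, (b n : ℝ) / (a n : ℝ))
        ≤ 2 ^ (Real.logb 2 (a N) ^ Γ) / (a N : ℝ) := by
  obtain ⟨n₁, hn₁⟩ := eventually_atTop.mp hbbd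
  set δ : ℝ := (1 - κ) / 2 with hδdef
  have hδ : 0 < δ := by rw [hδdef]; linarith
  set M : ℝ := (2 : ℝ) ^ (1 / (1 - κ)) with hMdef
  have hMpos : 0 < M := Real.rpow_pos_of_pos two_pos _
  set c : ℝ := 2 / κ with hcdef
  have hc : 0 < c := by positivity
  set B : ℝ := 7 * c + 1 + M with hBdef
  have hB1 : 1 ≤ B := by nlinarith
  set L₀ : ℝ := B ^ (1 / δ) with hL₀def
  have hL₀1 : 1 ≤ L₀ := Real.one_le_rpow hB1 (by positivity)
  refine ⟨κ + δ, by linarith, by rw [hδdef]; linarith, max n₁ ⌈L₀⌉₊, ?_⟩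
  intro N Q hN hQ hNQ hblock
  set L : ℝ := Real.logb 2 (a N) with hLdef
  have haNpos : (0 : ℝ) < a N := by exact_mod_cast hapos N
  have hpow_cast : ((2 ^ N : ℕ) : ℝ) = (2 : ℝ) ^ (N : ℝ) := by
    push_cast
    rw [← Real.rpow_natCast 2 N]
  have hLN : (N : ℝ) ≤ L := by
    have h2N : ((2 ^ N : ℕ) : ℝ) ≤ (a N : ℝ) := by
      exact_mod_cast hblock N le_rfl hNQ
    have := Real.logb_le_logb_of_le (b := 2) one_lt_two
      (x := ((2 ^ N : ℕ) : ℝ)) (by positivity) h2N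
    rwa [hpow_cast, Real.logb_rpow (by norm_num) (by norm_num)] at this
  have hNL₀ : L₀ ≤ (N : ℝ) := by
    have : (⌈L₀⌉₊ : ℝ) ≤ (N : ℝ) := by
      exact_mod_cast le_trans (le_max_right n₁ ⌈L₀⌉₊) hN
    exact le_trans (Nat.le_ceil L₀) this
  have hL1 : 1 ≤ L := le_trans (le_trans hL₀1 hNL₀) hLN
  have hL0 : 0 ≤ L := by linarith
  have hLL₀ : L₀ ≤ L := le_trans hNL₀ hLN
  have haNeq : (a N : ℝ) = 2 ^ L := (Real.rpow_logb two_pos (by norm_num) haNpos).symm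
  -- per-term bound
  have key : ∀ n ∈ Finset.Icc N Q, (b n : ℝ) / (a n : ℝ)
      ≤ 2 ^ (L ^ κ - L + M) * 2 ^ (-(max ((n : ℝ) - L) 0) / 2) := by
    intro n hn
    simp only [Finset.mem_Icc] at hn
    have hanpos : (0 : ℝ) < a n := by exact_mod_cast hapos n
    set Ln : ℝ := Real.logb 2 (a n) with hLndef
    have haneq : (a n : ℝ) = 2 ^ Ln := (Real.rpow_logb two_pos (by norm_num) hanpos).symm
    have hLnL : L ≤ Ln :=
      Real.logb_le_logb_of_le one_lt_two haNpos (by exact_mod_cast hmono hn.1)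
    have hLnn : (n : ℝ) ≤ Ln := by
      have h2n : ((2 ^ n : ℕ) : ℝ) ≤ (a n : ℝ) := by
        exact_mod_cast hblock n hn.1 hn.2
      have hcast : ((2 ^ n : ℕ) : ℝ) = (2 : ℝ) ^ (n : ℝ) := by
        push_cast; rw [← Real.rpow_natCast 2 n]
      have := Real.logb_le_logb_of_le (b := 2) one_lt_two
        (x := ((2 ^ n : ℕ) : ℝ)) (by positivity) h2n
      rwa [hcast, Real.logb_rpow (by norm_num) (by norm_num)] at this
    have hbn : (b n : ℝ) ≤ 2 ^ (Ln ^ κ) := hn₁ n (le_trans (le_trans (le_max_left _ _) hN) hn.1)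
    have step1 : (b n : ℝ) / (a n : ℝ) ≤ 2 ^ (Ln ^ κ - Ln) := by
      calc (b n : ℝ) / (a n : ℝ) ≤ 2 ^ (Ln ^ κ) / (a n : ℝ) := by gcongr
        _ = 2 ^ (Ln ^ κ - Ln) := by rw [haneq, ← Real.rpow_sub two_pos]
    have step2 : Ln ^ κ - Ln ≤ (L ^ κ - L) + M - (Ln - L) / 2 := by
      have := decay_bound hκ0 hκ1 hL0 hLnL
      rw [← hMdef] at this
      linarith
    have hmaxle : max ((n : ℝ) - L) 0 ≤ Ln - L := by
      apply max_le <;> linarith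
    have step3 : Ln ^ κ - Ln ≤ (L ^ κ - L + M) + (-(max ((n : ℝ) - L) 0) / 2) := by
      linarith
    calc (b n : ℝ) / (a n : ℝ) ≤ 2 ^ (Ln ^ κ - Ln) := step1
      _ ≤ 2 ^ ((L ^ κ - L + M) + (-(max ((n : ℝ) - L) 0) / 2)) :=
          Real.rpow_le_rpow_of_exponent_le one_le_two step3
      _ = 2 ^ (L ^ κ - L + M) * 2 ^ (-(max ((n : ℝ) - L) 0) / 2) :=
          Real.rpow_add two_pos _ _
  set T : ℕ := ⌈L⌉₊ with hTdef
  have hLT : L ≤ (T : ℝ) := Nat.le_ceil L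
  have hTL : (T : ℝ) ≤ L + 1 := by
    have := Nat.ceil_lt_add_one hL0
    linarith
  have sumbd : (∑ n ∈ Finset.Icc N Q, (b n : ℝ) / (a n : ℝ))
      ≤ 2 ^ (L ^ κ - L + M) * (L + 6) := by
    calc (∑ n ∈ Finset.Icc N Q, (b n : ℝ) / (a n : ℝ))
        ≤ ∑ n ∈ Finset.Icc N Q,
            2 ^ (L ^ κ - L + M) * 2 ^ (-(max ((n : ℝ) - L) 0) / 2) :=
          Finset.sum_le_sum key
      _ = 2 ^ (L ^ κ - L + M) *
            ∑ n ∈ Finset.Icc N Q, (2 : ℝ) ^ (-(max ((n : ℝ) - L) 0) / 2) := by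
          rw [Finset.mul_sum]
      _ ≤ 2 ^ (L ^ κ - L + M) * ((T : ℝ) + 5) :=
          mul_le_mul_of_nonneg_left (sum_decay L hL0 N Q T hLT)
            (Real.rpow_pos_of_pos two_pos _).le
      _ ≤ 2 ^ (L ^ κ - L + M) * (L + 6) :=
          mul_le_mul_of_nonneg_left (by linarith)
            (Real.rpow_pos_of_pos two_pos _).le
  -- final exponent comparison
  have hlog : Real.logb 2 (L + 6) ≤ c * (L ^ κ + 6) := by
    have hL6 : (0 : ℝ) < L + 6 := by linarith
    have h1 : Real.log (L + 6) ≤ (L + 6) ^ κ / κ :=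
      Real.log_le_rpow_div hL6.le hκ0
    have h2 : (L + 6) ^ κ ≤ L ^ κ + 6 ^ κ := rpow_subadd hκ0 hκ1.le hL0 (by norm_num)
    have h3 : (6 : ℝ) ^ κ ≤ 6 := by
      have := Real.rpow_le_rpow_of_exponent_le (x := 6) (by norm_num) hκ1.le
      rwa [Real.rpow_one] at this
    have hlog2 : (0.6931471803 : ℝ) < Real.log 2 := Real.log_two_gt_d9
    have hlogpos : (0 : ℝ) ≤ Real.log (L + 6) := Real.log_nonneg (by linarith)
    have heq : Real.logb 2 (L + 6) = Real.log (L + 6) / Real.log 2 := rfl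
    rw [heq, hcdef]
    have hstep : Real.log (L + 6) / Real.log 2 ≤ 2 * Real.log (L + 6) := by
      rw [div_le_iff₀ (by linarith)]
      nlinarith
    have hmul : Real.log (L + 6) * κ ≤ (L + 6) ^ κ := (le_div_iff₀ hκ0).mp h1
    have hstep2 : Real.log (L + 6) ≤ (L ^ κ + 6) / κ := by
      rw [le_div_iff₀ hκ0]
      linarith
    calc Real.log (L + 6) / Real.log 2 ≤ 2 * Real.log (L + 6) := hstep
      _ ≤ 2 * ((L ^ κ + 6) / κ) := by linarith
      _ = 2 / κ * (L ^ κ + 6) := by ring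
  have hLκ1 : (1 : ℝ) ≤ L ^ κ := Real.one_le_rpow hL1 hκ0.le
  have hBLδ : B ≤ L ^ δ := by
    calc B = L₀ ^ δ := by
          rw [hL₀def, ← Real.rpow_mul (by linarith), one_div,
            inv_mul_cancel₀ hδ.ne', Real.rpow_one]
      _ ≤ L ^ δ := Real.rpow_le_rpow (by linarith) hLL₀ hδ.le
  have hexp : L ^ κ + M + Real.logb 2 (L + 6) ≤ L ^ (κ + δ) := by
    have h1 : L ^ κ + M + Real.logb 2 (L + 6) ≤ (1 + c) * L ^ κ + (6 * c + M) := by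
      linarith [hlog]
    have h2 : (1 + c) * L ^ κ + (6 * c + M) ≤ B * L ^ κ := by
      rw [hBdef]
      nlinarith [hLκ1, hc.le, hMpos.le]
    have h3 : B * L ^ κ ≤ L ^ δ * L ^ κ := by
      apply mul_le_mul_of_nonneg_right hBLδ (by positivity)
    have h4 : L ^ δ * L ^ κ = L ^ (κ + δ) := by
      rw [← Real.rpow_add (by linarith)]; ring_nf
    linarith
  have hfinal : 2 ^ (L ^ κ - L + M) * (L + 6) ≤ 2 ^ (L ^ (κ + δ)) / (a N : ℝ) := by
    have hL6eq : (L + 6) = 2 ^ Real.logb 2 (L + 6) :=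
      (Real.rpow_logb two_pos (by norm_num) (by linarith)).symm
    rw [haNeq, ← Real.rpow_sub two_pos]
    calc 2 ^ (L ^ κ - L + M) * (L + 6)
        = 2 ^ (L ^ κ - L + M) * 2 ^ Real.logb 2 (L + 6) := by rw [← hL6eq]
      _ = 2 ^ (L ^ κ - L + M + Real.logb 2 (L + 6)) := (Real.rpow_add two_pos _ _).symm
      _ ≤ 2 ^ (L ^ (κ + δ) - L) := by
          apply Real.rpow_le_rpow_of_exponent_le one_le_two
          linarith
  exact le_trans sumbd hfinal
end
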